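/- arXiv:q-alg/9704004 — 6 statements merged into one kernel-verified Lean document; each statement's English description precedes it below -/
import Mathlib

section
/- Let l ≥ 1 be an integer and let f : ℤ/lℤ → ℤ be a map with f(0) = 0. Then the function ∏_{r=1}^{l−1} [r]_l^{f(r mod l)} is identically equal to 1 on ℍ if and only if f is odd, i.e. f(−r) = −f(r) for all r ∈ ℤ/lℤ. -/
open Complex Filter Topology UpperHalfPlane Matrix MatrixGroups
open scoped Real Manifold

noncomputable section

/-- `B(x) = y² − y + 1/6` where `y` is the fractional part of `x`. -/
def bern (x : ℝ) : ℝ := Int.fract x ^ 2 - Int.fract x + 1 / 6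

/-- The modular unit `[r]_l`. -/
def rl (l r : ℤ) : UpperHalfPlane → ℂ := fun z =>
  Complex.exp (2 * (π : ℂ) * Complex.I *
      ((-((l : ℝ) * bern ((r : ℝ) / (l : ℝ)) / 2) : ℝ) : ℂ) * (z : ℂ)) *
    (∏' n : {n : ℤ // 0 < n ∧ n ≡ r [ZMOD l]},
      (1 - Complex.exp (2 * (π : ℂ) * Complex.I * ((n : ℤ) : ℂ) * (z : ℂ)))⁻¹) *
    (∏' n : {n : ℤ // 0 < n ∧ n ≡ -r [ZMOD l]},
      (1 - Complex.exp (2 * (π : ℂ) * Complex.I * ((n : ℤ) : ℂ) * (z : ℂ)))⁻¹)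




def posEquiv (P : ℤ → Prop) : {n : ℤ // 0 < n ∧ P n} ≃ {n : ℕ // 0 < n ∧ P (n : ℤ)} where
  toFun n := ⟨n.1.toNat, by
    have h1 := n.2.1
    have h2 := n.2.2
    exact ⟨by omega, by rwa [Int.toNat_of_nonneg h1.le]⟩⟩
  invFun m := ⟨(m.1 : ℤ), by exact_mod_cast m.2⟩
  left_inv n := by ext; simp [Int.toNat_of_nonneg n.2.1.le]
  right_inv m := by ext; simp

lemma summable_sset {P : ℤ → Prop} {x : ℝ} (h0 : 0 ≤ x) (h1 : x < 1) :
    Summable fun n : {n : ℤ // 0 < n ∧ P n} => x ^ (n : ℤ).toNat := by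
  have hgeo : Summable fun n : ℕ => x ^ n := summable_geometric_of_lt_one h0 h1
  have h2 : Summable fun m : {n : ℕ // 0 < n ∧ P (n : ℤ)} => x ^ (m : ℕ) :=
    hgeo.subtype _
  have := (Equiv.summable_iff (posEquiv P)).2 h2
  refine this.congr fun n => ?_
  rfl

lemma summable_sset_of_bound {P : ℤ → Prop} {x : ℝ} (h0 : 0 ≤ x) (h1 : x < 1)
    {g : ℤ → ℝ} {C : ℝ} (hb : ∀ n : ℤ, 0 < n → |g n| ≤ C * x ^ n.toNat) :
    Summable fun n : {n : ℤ // 0 < n ∧ P n} => g n := by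
  have : Summable fun n : {n : ℤ // 0 < n ∧ P n} => C * x ^ (n : ℤ).toNat :=
    (summable_sset h0 h1).mul_left C
  exact Summable.of_abs (this.of_nonneg_of_le (fun n => abs_nonneg _)
    (fun n => hb n.1 n.2.1))

lemma abs_log_one_sub_pow_le {x : ℝ} (h0 : 0 ≤ x) (h1 : x < 1) (n : ℕ) :
    |Real.log (1 - x ^ n)| ≤ (1 - x)⁻¹ * x ^ n := by
  rcases Nat.eq_zero_or_pos n with rfl | hn
  · simp only [pow_zero, sub_self, Real.log_zero, abs_zero, mul_one]
    rw [inv_nonneg]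
    linarith
  have hxn : x ^ n ≤ x := by
    calc x ^ n ≤ x ^ 1 := pow_le_pow_of_le_one h0 h1.le hn
    _ = x := pow_one x
  have h2 : x ^ n < 1 := lt_of_le_of_lt hxn h1
  have h3 : 0 < 1 - x ^ n := by linarith
  have hxnn : 0 ≤ x ^ n := pow_nonneg h0 n
  rw [abs_of_nonpos (Real.log_nonpos (by linarith) (by linarith)), ← Real.log_inv]
  have h4 := Real.log_le_sub_one_of_pos (inv_pos.2 h3)
  have h5 : (1 - x ^ n)⁻¹ - 1 = x ^ n / (1 - x ^ n) := by field_simp; ring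
  rw [h5] at h4
  refine h4.trans ?_
  rw [div_eq_inv_mul]
  gcongr

lemma neg_log_one_sub_ge {y : ℝ} (h0 : 0 ≤ y) (h1 : y < 1) :
    y ≤ -Real.log (1 - y) := by
  have := Real.log_le_sub_one_of_pos (show (0:ℝ) < 1 - y by linarith)
  linarith

lemma pow_toNat_lt_one {x : ℝ} (h0 : 0 ≤ x) (h1 : x < 1) {n : ℤ} (hn : 0 < n) :
    x ^ n.toNat ≤ x := by
  calc x ^ n.toNat ≤ x ^ 1 := pow_le_pow_of_le_one h0 h1.le (by omega)
  _ = x := pow_one x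

lemma summable_log_sset {P : ℤ → Prop} {x : ℝ} (h0 : 0 ≤ x) (h1 : x < 1) :
    Summable fun n : {n : ℤ // 0 < n ∧ P n} => Real.log (1 - x ^ (n : ℤ).toNat) :=
  summable_sset_of_bound (P := P) h0 h1 (C := (1 - x)⁻¹)
    (g := fun n => Real.log (1 - x ^ n.toNat)) (fun n _ => abs_log_one_sub_pow_le h0 h1 _)

lemma one_sub_pow_pos {x : ℝ} (h0 : 0 ≤ x) (h1 : x < 1) {n : ℤ} (hn : 0 < n) :
    0 < 1 - x ^ n.toNat := by
  have := pow_toNat_lt_one h0 h1 hn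
  linarith

lemma hasProd_real {P : ℤ → Prop} {x : ℝ} (h0 : 0 ≤ x) (h1 : x < 1) :
    HasProd (fun n : {n : ℤ // 0 < n ∧ P n} => (1 - x ^ (n : ℤ).toNat)⁻¹)
      (∏' n : {n : ℤ // 0 < n ∧ P n}, (1 - x ^ (n : ℤ).toNat)⁻¹) := by
  refine (Real.multipliable_of_summable_log
    (f := fun n : {n : ℤ // 0 < n ∧ P n} => (1 - x ^ (n.1).toNat)⁻¹)
    (fun n => inv_pos.2 (one_sub_pow_pos h0 h1 n.2.1)) ?_).hasProd
  refine ((summable_log_sset h0 h1).neg).congr fun n => ?_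
  rw [Real.log_inv]

lemma tprod_eq_exp_neg_tsum {P : ℤ → Prop} {x : ℝ} (h0 : 0 ≤ x) (h1 : x < 1) :
    ∏' n : {n : ℤ // 0 < n ∧ P n}, (1 - x ^ (n : ℤ).toNat)⁻¹
      = Real.exp (-∑' n : {n : ℤ // 0 < n ∧ P n}, Real.log (1 - x ^ (n : ℤ).toNat)) := by
  have h := Real.rexp_tsum_eq_tprod
    (f := fun n : {n : ℤ // 0 < n ∧ P n} => (1 - x ^ (n.1).toNat)⁻¹)
    (fun n => inv_pos.2 (one_sub_pow_pos h0 h1 n.2.1)) (by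
      refine ((summable_log_sset h0 h1).neg).congr fun n => ?_
      rw [Real.log_inv])
  rw [← h, ← tsum_neg]
  congr 1
  exact tsum_congr fun n => (Real.log_inv _)


def zt (t : ℝ) (ht : 0 < t) : UpperHalfPlane := ⟨Complex.I * t, by simp [ht]⟩

lemma zt_coe (t : ℝ) (ht : 0 < t) : ((zt t ht : UpperHalfPlane) : ℂ) = Complex.I * t := rfl

lemma cexp_eval (t c : ℝ) :
    Complex.exp (2 * (π : ℂ) * Complex.I * (c : ℂ) * (Complex.I * t))
      = ((Real.exp (-(2 * π * t * c)) : ℝ) : ℂ) := by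
  rw [show 2 * (π : ℂ) * Complex.I * (c : ℂ) * (Complex.I * t)
      = (Complex.I * Complex.I) * (2 * (π : ℂ) * c * t) by ring, Complex.I_mul_I]
  rw [show (-1 : ℂ) * (2 * (π : ℂ) * c * t) = (((-(2 * π * t * c) : ℝ)) : ℂ) by push_cast; ring]
  exact (Complex.ofReal_exp _).symm

lemma cexp_eval_int (t : ℝ) {n : ℤ} (hn : 0 < n) :
    Complex.exp (2 * (π : ℂ) * Complex.I * (n : ℂ) * (Complex.I * t))
      = (((Real.exp (-(2 * π * t)) ^ n.toNat : ℝ)) : ℂ) := by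
  have h := cexp_eval t (n : ℝ)
  rw [show ((n : ℝ) : ℂ) = (n : ℂ) by push_cast; rfl] at h
  rw [h, ← Real.exp_nat_mul]
  congr 1
  have : ((n.toNat : ℝ)) = (n : ℝ) := by exact_mod_cast congrArg (fun m : ℤ => (m : ℝ)) (Int.toNat_of_nonneg hn.le)
  rw [this]; ring

lemma int_toNat_real {n : ℤ} (hn : 0 < n) : ((n.toNat : ℝ)) = (n : ℝ) := by
  exact_mod_cast congrArg (fun m : ℤ => (m : ℝ)) (Int.toNat_of_nonneg hn.le)

lemma tprod_eval (l c : ℤ) (t : ℝ) (ht : 0 < t) :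
    (∏' n : {n : ℤ // 0 < n ∧ n ≡ c [ZMOD l]},
      (1 - Complex.exp (2 * (π : ℂ) * Complex.I * ((n : ℤ) : ℂ) * (Complex.I * (t : ℂ))))⁻¹)
    = ((∏' n : {n : ℤ // 0 < n ∧ n ≡ c [ZMOD l]},
        (1 - Real.exp (-(2 * π * t)) ^ (n : ℤ).toNat)⁻¹ : ℝ) : ℂ) := by
  set x := Real.exp (-(2 * π * t)) with hx
  have h0 : (0:ℝ) ≤ x := (Real.exp_pos _).le
  have h1 : x < 1 := by
    rw [hx, Real.exp_lt_one_iff]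
    have : (0:ℝ) < 2 * π * t := by positivity
    linarith
  have hp := (hasProd_real (P := fun n => n ≡ c [ZMOD l]) h0 h1).map
    Complex.ofRealHom Complex.continuous_ofReal
  have key : (fun n : {n : ℤ // 0 < n ∧ n ≡ c [ZMOD l]} =>
      (1 - Complex.exp (2 * (π : ℂ) * Complex.I * ((n : ℤ) : ℂ) * (Complex.I * (t : ℂ))))⁻¹)
      = (⇑Complex.ofRealHom ∘ fun n : {n : ℤ // 0 < n ∧ n ≡ c [ZMOD l]} =>
          (1 - x ^ ((n : ℤ)).toNat)⁻¹) := by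
    funext n
    simp only [Function.comp_apply, Complex.ofRealHom_eq_coe]
    rw [cexp_eval_int t n.2.1, Complex.ofReal_inv, Complex.ofReal_sub, Complex.ofReal_one,
      Complex.ofReal_pow]
  rw [key]
  exact hp.tprod_eq

lemma rl_eval (l r : ℤ) (t : ℝ) (ht : 0 < t) :
    rl l r (zt t ht) = (((Real.exp (2 * π * t * ((l : ℝ) * bern ((r : ℝ) / (l : ℝ)) / 2))
      * (∏' n : {n : ℤ // 0 < n ∧ n ≡ r [ZMOD l]},
          (1 - Real.exp (-(2 * π * t)) ^ (n : ℤ).toNat)⁻¹)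
      * (∏' n : {n : ℤ // 0 < n ∧ n ≡ -r [ZMOD l]},
          (1 - Real.exp (-(2 * π * t)) ^ (n : ℤ).toNat)⁻¹) : ℝ)) : ℂ) := by
  unfold rl
  rw [zt_coe]
  rw [cexp_eval t (-((l : ℝ) * bern ((r : ℝ) / (l : ℝ)) / 2))]
  rw [tprod_eval l r t ht, tprod_eval l (-r) t ht]
  rw [show -(2 * π * t * -((l : ℝ) * bern ((r : ℝ) / (l : ℝ)) / 2))
      = 2 * π * t * ((l : ℝ) * bern ((r : ℝ) / (l : ℝ)) / 2) by ring]
  rw [Complex.ofReal_mul, Complex.ofReal_mul, Complex.ofReal_exp]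

lemma norm_q (z : ℍ) {n : ℤ} (hn : 0 < n) :
    ‖Complex.exp (2 * (π : ℂ) * Complex.I * ((n : ℤ) : ℂ) * (z : ℂ))‖
      = Real.exp (-(2 * π * UpperHalfPlane.im z)) ^ n.toNat := by
  rw [Complex.norm_exp, ← Real.exp_nat_mul]
  congr 1
  have hre : (2 * (π : ℂ) * Complex.I * ((n : ℤ) : ℂ) * (z : ℂ)).re
      = -(2 * π * (n : ℝ) * (z : ℂ).im) := by
    simp [Complex.mul_re, Complex.mul_im]
  rw [hre, UpperHalfPlane.coe_im, int_toNat_real hn]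
  ring

lemma rl_ne (l r : ℤ) (z : ℍ) : rl l r z ≠ 0 := by
  set y := Real.exp (-(2 * π * UpperHalfPlane.im z)) with hy
  have hy0 : (0:ℝ) < y := Real.exp_pos _
  have hy1 : y < 1 := by
    rw [hy, Real.exp_lt_one_iff]
    have h := UpperHalfPlane.im_pos z
    have hpi := Real.pi_pos
    nlinarith
  have key : ∀ P : ℤ → Prop, (∏' n : {n : ℤ // 0 < n ∧ P n},
      (1 - Complex.exp (2 * (π : ℂ) * Complex.I * ((n : ℤ) : ℂ) * (z : ℂ)))⁻¹) ≠ 0 := by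
    intro P
    have habs : ∀ n : ℤ, 0 < n →
        ‖Complex.exp (2 * (π : ℂ) * Complex.I * ((n : ℤ) : ℂ) * (z : ℂ))‖ ≤ y := by
      intro n hn
      rw [norm_q z hn]
      exact pow_toNat_lt_one hy0.le hy1 hn
    have hne : ∀ n : {n : ℤ // 0 < n ∧ P n},
        (1 - Complex.exp (2 * (π : ℂ) * Complex.I * ((n : ℤ) : ℂ) * (z : ℂ)))⁻¹ ≠ 0 := by
      intro n
      apply inv_ne_zero
      intro hcon
      have h1 : Complex.exp (2 * (π : ℂ) * Complex.I * ((n : ℤ) : ℂ) * (z : ℂ)) = 1 := by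
        have := sub_eq_zero.1 hcon; exact this.symm
      have := habs n.1 n.2.1
      rw [h1] at this
      simp at this
      linarith
    have hsum : Summable fun n : {n : ℤ // 0 < n ∧ P n} =>
        Complex.log ((1 - Complex.exp (2 * (π : ℂ) * Complex.I * ((n : ℤ) : ℂ) * (z : ℂ)))⁻¹) := by
      set C : ℝ := (1 - y)⁻¹ / 2 + 1 with hC
      refine Summable.of_norm_bounded (g := fun n : {n : ℤ // 0 < n ∧ P n} =>
        C * y ^ ((n : ℤ)).toNat) ((summable_sset hy0.le hy1).mul_left C) ?_
      intro n
      set q := Complex.exp (2 * (π : ℂ) * Complex.I * ((n.1 : ℤ) : ℂ) * (z : ℂ)) with hq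
      have haq : ‖q‖ = y ^ (n.1).toNat := norm_q z n.2.1
      have haqy : ‖q‖ ≤ y := by rw [haq]; exact pow_toNat_lt_one hy0.le hy1 n.2.1
      have haq1 : ‖q‖ < 1 := lt_of_le_of_lt haqy hy1
      have hrepos : 0 < (1 - q).re := by
        have := Complex.abs_re_le_norm q
        simp only [Complex.sub_re, Complex.one_re]
        have : q.re ≤ ‖q‖ := Complex.re_le_norm q
        linarith
      have harg : (1 - q).arg ≠ π := by
        intro hcon
        have := Complex.arg_eq_pi_iff.1 hcon
        linarith [this.1]
      rw [Complex.log_inv _ harg, norm_neg]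
      have hb := Complex.norm_log_one_add_le (z := -q)
        (by rwa [norm_neg])
      rw [show (1 : ℂ) + -q = 1 - q by ring] at hb
      refine hb.trans ?_
      rw [norm_neg, haq]
      have h1 : (1 - y ^ (n.1).toNat)⁻¹ ≤ (1 - y)⁻¹ := by
        apply inv_anti₀
        · linarith
        · have := pow_toNat_lt_one hy0.le hy1 n.2.1; linarith
      have h2 : (0:ℝ) ≤ y ^ (n.1).toNat := pow_nonneg hy0.le _
      have h3 : y ^ (n.1).toNat ≤ 1 := le_of_lt (lt_of_le_of_lt (pow_toNat_lt_one hy0.le hy1 n.2.1) hy1)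
      have h4 : (0:ℝ) < 1 - y := by linarith
      calc (y ^ (n.1).toNat) ^ 2 * (1 - y ^ (n.1).toNat)⁻¹ / 2 + y ^ (n.1).toNat
          ≤ y ^ (n.1).toNat * (1 - y)⁻¹ / 2 + y ^ (n.1).toNat := by
            have : (y ^ (n.1).toNat) ^ 2 * (1 - y ^ (n.1).toNat)⁻¹
                ≤ y ^ (n.1).toNat * (1 - y)⁻¹ := by
              have hsq : (y ^ (n.1).toNat) ^ 2 ≤ y ^ (n.1).toNat := by nlinarith
              have hpos : (0:ℝ) ≤ (1 - y ^ (n.1).toNat)⁻¹ := by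
                apply inv_nonneg.2; linarith [pow_toNat_lt_one hy0.le hy1 n.2.1]
              calc (y ^ (n.1).toNat) ^ 2 * (1 - y ^ (n.1).toNat)⁻¹
                  ≤ y ^ (n.1).toNat * (1 - y ^ (n.1).toNat)⁻¹ := by
                    apply mul_le_mul_of_nonneg_right hsq hpos
                _ ≤ y ^ (n.1).toNat * (1 - y)⁻¹ := by
                    apply mul_le_mul_of_nonneg_left h1 h2
            linarith
        _ = ((1 - y)⁻¹ / 2 + 1) * y ^ (n.1).toNat := by ring
    have hprod := Complex.cexp_tsum_eq_tprod
      (f := fun n : {n : ℤ // 0 < n ∧ P n} =>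
        (1 - Complex.exp (2 * (π : ℂ) * Complex.I * ((n : ℤ) : ℂ) * (z : ℂ)))⁻¹)
      (fun n => hne n) hsum
    rw [← hprod]
    exact Complex.exp_ne_zero _
  exact mul_ne_zero (mul_ne_zero (Complex.exp_ne_zero _) (key _)) (key _)

lemma modeq_congr (l a b n : ℤ) (hab : a ≡ b [ZMOD l]) :
    (n ≡ a [ZMOD l]) = (n ≡ b [ZMOD l]) :=
  propext ⟨fun h => h.trans hab, fun h => h.trans hab.symm⟩

lemma modeq_sub (l r : ℤ) : l - r ≡ -r [ZMOD l] :=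
  Int.ModEq.symm (Int.modEq_iff_dvd.2 (by simpa using ⟨(1:ℤ), by ring⟩))

lemma tprod_subtype_congr {α : Type*} [CommMonoid α] [TopologicalSpace α] {p q : ℤ → Prop}
    (h : ∀ n, p n ↔ q n) (F : ℤ → α) :
    ∏' n : {n : ℤ // p n}, F n = ∏' n : {n : ℤ // q n}, F n := by
  refine (tprod_congr (fun c => ?_)).trans
    (Equiv.tprod_eq ⟨fun n => ⟨n.1, (h n.1).1 n.2⟩, fun n => ⟨n.1, (h n.1).2 n.2⟩,
      fun _ => rfl, fun _ => rfl⟩ (fun n : {n : ℤ // q n} => F n.1))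
  rfl

lemma rl_symm (l r : ℤ) (h1 : 1 ≤ r) (h2 : r ≤ l - 1) (z : ℍ) :
    rl l (l - r) z = rl l r z := by
  have hl0 : (0:ℝ) < (l:ℝ) := by exact_mod_cast (by omega : (0:ℤ) < l)
  have hf1 : Int.fract ((r : ℝ) / (l : ℝ)) = (r : ℝ) / (l : ℝ) := by
    refine Int.fract_eq_self.2 ⟨by positivity, ?_⟩
    rw [div_lt_one hl0]
    exact_mod_cast (by omega : r < l)
  have hf2 : Int.fract (((l - r : ℤ) : ℝ) / (l : ℝ)) = ((l - r : ℤ) : ℝ) / (l : ℝ) := by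
    refine Int.fract_eq_self.2 ⟨?_, ?_⟩
    · have : (0:ℝ) ≤ ((l - r : ℤ) : ℝ) := by exact_mod_cast (by omega : (0:ℤ) ≤ l - r)
      positivity
    · rw [div_lt_one hl0]
      exact_mod_cast (by omega : l - r < l)
  have hbern : bern (((l - r : ℤ) : ℝ) / (l : ℝ)) = bern ((r : ℝ) / (l : ℝ)) := by
    unfold bern
    rw [hf1, hf2]
    have hcast : ((l - r : ℤ) : ℝ) = (l : ℝ) - (r : ℝ) := by push_cast; ring
    rw [hcast]
    field_simp
    ring
  have e1 : ∀ n : ℤ, (n ≡ l - r [ZMOD l]) = (n ≡ -r [ZMOD l]) :=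
    fun n => modeq_congr l (l - r) (-r) n (modeq_sub l r)
  have e2 : ∀ n : ℤ, (n ≡ -(l - r) [ZMOD l]) = (n ≡ r [ZMOD l]) :=
    fun n => modeq_congr l (-(l - r)) r n (by simpa using (modeq_sub l r).neg)
  unfold rl
  rw [hbern,
    tprod_subtype_congr (p := fun n => 0 < n ∧ n ≡ l - r [ZMOD l])
      (q := fun n => 0 < n ∧ n ≡ -r [ZMOD l])
      (fun n => and_congr_right (fun _ => iff_of_eq (e1 n)))
      (fun n => (1 - Complex.exp (2 * (π : ℂ) * Complex.I * ((n : ℤ) : ℂ) * (z : ℂ)))⁻¹),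
    tprod_subtype_congr (p := fun n => 0 < n ∧ n ≡ -(l - r) [ZMOD l])
      (q := fun n => 0 < n ∧ n ≡ r [ZMOD l])
      (fun n => and_congr_right (fun _ => iff_of_eq (e2 n)))
      (fun n => (1 - Complex.exp (2 * (π : ℂ) * Complex.I * ((n : ℤ) : ℂ) * (z : ℂ)))⁻¹)]
  ring

lemma forward (l : ℕ) (hl : 1 ≤ l) (f : ZMod l → ℤ) (hodd : ∀ r : ZMod l, f (-r) = -f r)
    (z : ℍ) : ∏ r ∈ Finset.Icc (1 : ℤ) ((l : ℤ) - 1), rl l r z ^ f (r : ZMod l) = 1 := by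
  have hcast : ∀ a : ℤ, (((l : ℤ) - a : ℤ) : ZMod l) = -(a : ZMod l) := by
    intro a
    push_cast
    simp
  refine Finset.prod_involution (fun a _ => (l : ℤ) - a) ?_ ?_ ?_ ?_
  · intro a ha
    simp only [Finset.mem_Icc] at ha
    rw [rl_symm (l : ℤ) a ha.1 ha.2 z, hcast a, hodd, _root_.zpow_neg]
    exact mul_inv_cancel₀ (zpow_ne_zero _ (rl_ne _ _ _))
  · intro a ha hne hcon
    apply hne
    have h1 : (a : ZMod l) = -(a : ZMod l) := by
      conv_lhs => rw [← hcon]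
      rw [hcast]
    have h2 : f (a : ZMod l) = 0 := by
      have := hodd (a : ZMod l)
      rw [← h1] at this
      omega
    rw [h2, zpow_zero]
  · intro a ha
    simp only [Finset.mem_Icc] at ha ⊢
    omega
  · intro a ha
    show (l : ℤ) - ((l : ℤ) - a) = a
    omega

theorem myzpow (a : ℝ) (k : ℤ) : (Real.exp a) ^ k = Real.exp (k * a) := by
  rw [← Real.rpow_intCast (Real.exp a) k, Real.rpow_def_of_pos (Real.exp_pos a), Real.log_exp,
    mul_comm]


def Slog (l : ℕ) (c : ℤ) (x : ℝ) : ℝ :=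
  ∑' n : {n : ℤ // 0 < n ∧ n ≡ c [ZMOD (l : ℤ)]}, Real.log (1 - x ^ (n : ℤ).toNat)

lemma main_real (l : ℕ) (f : ZMod l → ℤ)
    (H : ∀ z : UpperHalfPlane,
      ∏ r ∈ Finset.Icc (1 : ℤ) ((l : ℤ) - 1), rl l r z ^ f (r : ZMod l) = 1)
    {x : ℝ} (hx0 : 0 < x) (hx1 : x < 1) :
    ∑ r ∈ Finset.Icc (1 : ℤ) ((l : ℤ) - 1), (f (r : ZMod l) : ℝ) *
      (((l : ℝ) * bern ((r : ℝ) / (l : ℝ)) / 2) * Real.log x + Slog l r x + Slog l (-r) x)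
      = 0 := by
  have hπ := Real.pi_pos
  have hlogx : Real.log x < 0 := Real.log_neg hx0 hx1
  set t : ℝ := -Real.log x / (2 * π) with ht
  have ht0 : 0 < t := by
    rw [ht]
    apply div_pos (by linarith) (by positivity)
  have h2pt : 2 * π * t = -Real.log x := by
    rw [ht]
    field_simp
  have hxt : Real.exp (-(2 * π * t)) = x := by
    rw [h2pt, neg_neg]
    exact Real.exp_log hx0
  have h := H (zt t ht0)
  have hstep : ∀ r ∈ Finset.Icc (1 : ℤ) ((l : ℤ) - 1),
      rl l r (zt t ht0) ^ f (r : ZMod l)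
      = ((Real.exp (-((f (r : ZMod l) : ℝ) *
          (((l : ℝ) * bern ((r : ℝ) / (l : ℝ)) / 2) * Real.log x
            + Slog l r x + Slog l (-r) x))) : ℝ) : ℂ) := by
    intro r _
    rw [rl_eval l r t ht0, hxt,
      tprod_eq_exp_neg_tsum (P := fun n => n ≡ r [ZMOD (l:ℤ)]) hx0.le hx1,
      tprod_eq_exp_neg_tsum (P := fun n => n ≡ -r [ZMOD (l:ℤ)]) hx0.le hx1,
      ← Real.exp_add, ← Real.exp_add, ← Complex.ofReal_zpow, myzpow]
    rw [h2pt]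
    congr 2
    unfold Slog
    push_cast
    ring
  rw [Finset.prod_congr rfl hstep, ← Complex.ofReal_prod, ← Real.exp_sum,
    Complex.ofReal_eq_one, Real.exp_eq_one_iff] at h
  rw [← neg_eq_zero, ← Finset.sum_neg_distrib]
  exact h

lemma summable_log_nat {x : ℝ} (h0 : 0 ≤ x) (h1 : x < 1) :
    Summable fun n : ℕ => Real.log (1 - x ^ n) := by
  have : Summable fun n : ℕ => (1 - x)⁻¹ * x ^ n :=
    (summable_geometric_of_lt_one h0 h1).mul_left _
  exact Summable.of_abs (this.of_nonneg_of_le (fun n => abs_nonneg _)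
    (fun n => abs_log_one_sub_pow_le h0 h1 n))

lemma tsum_sset_eq_nat (P : ℤ → Prop) (F : ℕ → ℝ) :
    ∑' n : {n : ℤ // 0 < n ∧ P n}, F (n : ℤ).toNat
      = ∑' m : {m : ℕ // 0 < m ∧ P (m : ℤ)}, F m.1 := by
  refine (tsum_congr (fun c => ?_)).trans (Equiv.tsum_eq (posEquiv P) (fun m => F m.1))
  rfl

lemma tsum_nat_subtype_eq_indicator (Q : ℕ → Prop) (F : ℕ → ℝ) :
    ∑' m : {m : ℕ // Q m}, F m.1
      = ∑' n : ℕ, Set.indicator {k : ℕ | Q k} F n :=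
  tsum_subtype {k : ℕ | Q k} F


lemma Slog_eq_indicator (l : ℕ) (c : ℤ) (x : ℝ) :
    Slog l c x = ∑' n : ℕ, Set.indicator {k : ℕ | 0 < k ∧ (k : ℤ) ≡ c [ZMOD (l : ℤ)]}
        (fun k => Real.log (1 - x ^ k)) n := by
  unfold Slog
  rw [tsum_sset_eq_nat (P := fun n => n ≡ c [ZMOD (l : ℤ)]) (fun k => Real.log (1 - x ^ k))]
  exact tsum_nat_subtype_eq_indicator (fun k => 0 < k ∧ (k : ℤ) ≡ c [ZMOD (l : ℤ)])
    (fun k => Real.log (1 - x ^ k))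

lemma resolve (l : ℕ) (hl : 1 ≤ l) (φ : ZMod l → ℝ) (hφ0 : φ 0 = 0) (m : ℤ) :
    ∑ r ∈ Finset.Icc (1 : ℤ) ((l : ℤ) - 1), (if m ≡ r [ZMOD (l : ℤ)] then φ (r : ZMod l) else 0)
      = φ ((m : ZMod l)) := by
  have hl0 : (0 : ℤ) < (l : ℤ) := by exact_mod_cast hl
  by_cases hm : ((m : ZMod l)) = 0
  · rw [hm, hφ0]
    refine Finset.sum_eq_zero fun r hr => ?_
    simp only [Finset.mem_Icc] at hr
    rw [if_neg]
    intro hcon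
    have h1 : ((r : ℤ) : ZMod l) = 0 := by
      rw [← (ZMod.intCast_eq_intCast_iff m r l).2 hcon]
      exact hm
    have h2 : (l : ℤ) ∣ r := (ZMod.intCast_zmod_eq_zero_iff_dvd r l).1 h1
    have := Int.le_of_dvd (by omega) h2
    omega
  · set r₀ : ℤ := m % (l : ℤ) with hr₀def
    have hr₀0 : 0 ≤ r₀ := Int.emod_nonneg m (by omega)
    have hr₀l : r₀ < (l : ℤ) := Int.emod_lt_of_pos m hl0
    have hmr₀ : m ≡ r₀ [ZMOD (l : ℤ)] := (Int.emod_emod_of_dvd m dvd_rfl).symm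
    have hr₀ne : r₀ ≠ 0 := by
      intro hcon
      apply hm
      rw [(ZMod.intCast_eq_intCast_iff m r₀ l).2 hmr₀, hcon]
      simp
    have hmem : r₀ ∈ Finset.Icc (1 : ℤ) ((l : ℤ) - 1) := by
      simp only [Finset.mem_Icc]
      omega
    rw [Finset.sum_eq_single_of_mem r₀ hmem ?_]
    · rw [if_pos hmr₀]
      congr 1
      exact ((ZMod.intCast_eq_intCast_iff m r₀ l).2 hmr₀).symm
    · intro b hb hbne
      rw [if_neg]
      intro hcon
      have hb2 : b % (l : ℤ) = r₀ % (l : ℤ) := hcon.symm.trans hmr₀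
      simp only [Finset.mem_Icc] at hb
      rw [Int.emod_eq_of_lt (by omega) (by omega),
        Int.emod_eq_of_lt (by omega) (by omega)] at hb2
      exact hbne hb2


lemma collapse (l : ℕ) (hl : 1 ≤ l) (f : ZMod l → ℤ) (h0 : f 0 = 0)
    {x : ℝ} (hx0 : 0 ≤ x) (hx1 : x < 1) :
    ∑ r ∈ Finset.Icc (1 : ℤ) ((l : ℤ) - 1), (f (r : ZMod l) : ℝ) * (Slog l r x + Slog l (-r) x)
      = ∑' n : ℕ, ((f ((n : ℤ) : ZMod l) + f (-((n : ℤ) : ZMod l)) : ℤ) : ℝ)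
          * Real.log (1 - x ^ n) := by
  have hsum := summable_log_nat hx0 hx1
  have hterm : ∀ r ∈ Finset.Icc (1 : ℤ) ((l : ℤ) - 1),
      (f (r : ZMod l) : ℝ) * (Slog l r x + Slog l (-r) x)
      = ∑' n : ℕ, ((f (r : ZMod l) : ℝ) *
          (Set.indicator {k : ℕ | 0 < k ∧ (k : ℤ) ≡ r [ZMOD (l : ℤ)]}
            (fun k => Real.log (1 - x ^ k)) n
          + Set.indicator {k : ℕ | 0 < k ∧ (k : ℤ) ≡ -r [ZMOD (l : ℤ)]}
            (fun k => Real.log (1 - x ^ k)) n)) := by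
    intro r _
    rw [Slog_eq_indicator l r x, Slog_eq_indicator l (-r) x, ← Summable.tsum_add
      (hsum.indicator _) (hsum.indicator _), ← tsum_mul_left]
  rw [Finset.sum_congr rfl hterm, ← Summable.tsum_finsetSum (fun r _ => Summable.mul_left _
    ((hsum.indicator _).add (hsum.indicator _)))]
  refine tsum_congr fun n => ?_
  rcases Nat.eq_zero_or_pos n with rfl | hn
  · simp only [pow_zero, sub_self, Real.log_zero, mul_zero]
    refine Finset.sum_eq_zero fun r _ => ?_
    rw [Set.indicator_apply, Set.indicator_apply, if_neg (by simp), if_neg (by simp)]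
    ring
  · have key1 : ∑ r ∈ Finset.Icc (1 : ℤ) ((l : ℤ) - 1), (f (r : ZMod l) : ℝ) *
        Set.indicator {k : ℕ | 0 < k ∧ (k : ℤ) ≡ r [ZMOD (l : ℤ)]}
          (fun k => Real.log (1 - x ^ k)) n
        = (f ((n : ℤ) : ZMod l) : ℝ) * Real.log (1 - x ^ n) := by
      calc ∑ r ∈ Finset.Icc (1 : ℤ) ((l : ℤ) - 1), (f (r : ZMod l) : ℝ) *
            Set.indicator {k : ℕ | 0 < k ∧ (k : ℤ) ≡ r [ZMOD (l : ℤ)]}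
              (fun k => Real.log (1 - x ^ k)) n
          = ∑ r ∈ Finset.Icc (1 : ℤ) ((l : ℤ) - 1),
              (if (n : ℤ) ≡ r [ZMOD (l : ℤ)]
                then (f (r : ZMod l) : ℝ) * Real.log (1 - x ^ n) else 0) := by
            refine Finset.sum_congr rfl fun r _ => ?_
            rw [Set.indicator_apply]
            by_cases hc : (n : ℤ) ≡ r [ZMOD (l : ℤ)]
            · rw [if_pos ⟨hn, hc⟩, if_pos hc]
            · rw [if_neg (fun hmem => hc hmem.2), if_neg hc]
              ring
        _ = (f ((n : ℤ) : ZMod l) : ℝ) * Real.log (1 - x ^ n) :=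
            resolve l hl (fun s : ZMod l => (f s : ℝ) * Real.log (1 - x ^ n))
              (by simp [h0]) (n : ℤ)
    have key2 : ∑ r ∈ Finset.Icc (1 : ℤ) ((l : ℤ) - 1), (f (r : ZMod l) : ℝ) *
        Set.indicator {k : ℕ | 0 < k ∧ (k : ℤ) ≡ -r [ZMOD (l : ℤ)]}
          (fun k => Real.log (1 - x ^ k)) n
        = (f (-((n : ℤ) : ZMod l)) : ℝ) * Real.log (1 - x ^ n) := by
      have hcast2 : (f ((( -(n : ℤ)) : ℤ) : ZMod l) : ℝ) = (f (-((n : ℤ) : ZMod l)) : ℝ) := by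
        push_cast
        rfl
      calc ∑ r ∈ Finset.Icc (1 : ℤ) ((l : ℤ) - 1), (f (r : ZMod l) : ℝ) *
            Set.indicator {k : ℕ | 0 < k ∧ (k : ℤ) ≡ -r [ZMOD (l : ℤ)]}
              (fun k => Real.log (1 - x ^ k)) n
          = ∑ r ∈ Finset.Icc (1 : ℤ) ((l : ℤ) - 1),
              (if (-(n : ℤ)) ≡ r [ZMOD (l : ℤ)]
                then (f (r : ZMod l) : ℝ) * Real.log (1 - x ^ n) else 0) := by
            refine Finset.sum_congr rfl fun r _ => ?_
            rw [Set.indicator_apply]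
            by_cases hc : (-(n : ℤ)) ≡ r [ZMOD (l : ℤ)]
            · have hc' : (n : ℤ) ≡ -r [ZMOD (l : ℤ)] := by
                have := hc.neg
                simpa using this
              rw [if_pos ⟨hn, hc'⟩, if_pos hc]
            · have hc' : ¬ ((n : ℤ) ≡ -r [ZMOD (l : ℤ)]) := by
                intro hcon
                apply hc
                have := hcon.neg
                simpa using this
              rw [if_neg (fun hmem => hc' hmem.2), if_neg hc]
              ring
        _ = (f ((( -(n : ℤ)) : ℤ) : ZMod l) : ℝ) * Real.log (1 - x ^ n) :=
            resolve l hl (fun s : ZMod l => (f s : ℝ) * Real.log (1 - x ^ n))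
              (by simp [h0]) (-(n : ℤ))
        _ = (f (-((n : ℤ) : ZMod l)) : ℝ) * Real.log (1 - x ^ n) := by rw [hcast2]
    simp only [mul_add, Finset.sum_add_distrib, key1, key2]
    push_cast
    ring

set_option maxHeartbeats 2000000 in

lemma converse (l : ℕ) (hl : 1 ≤ l) (f : ZMod l → ℤ) (h0 : f 0 = 0)
    (H : ∀ z : UpperHalfPlane,
      ∏ r ∈ Finset.Icc (1 : ℤ) ((l : ℤ) - 1), rl l r z ^ f (r : ZMod l) = 1) :
    ∀ s : ZMod l, f (-s) = -f s := by
  classical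
  have : NeZero l := ⟨by omega⟩
  set A : ℝ := ∑ r ∈ Finset.Icc (1 : ℤ) ((l : ℤ) - 1),
    (f (r : ZMod l) : ℝ) * ((l : ℝ) * bern ((r : ℝ) / (l : ℝ)) / 2) with hA
  set G : ℕ → ℤ := fun n => f ((n : ℤ) : ZMod l) + f (-((n : ℤ) : ZMod l)) with hG
  set M : ℝ := ∑ s : ZMod l, |(f s : ℝ)| with hM
  have hM0 : 0 ≤ M := Finset.sum_nonneg fun s _ => abs_nonneg _
  have hfM : ∀ s : ZMod l, |(f s : ℝ)| ≤ M := fun s =>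
    Finset.single_le_sum (f := fun s : ZMod l => |(f s : ℝ)|)
      (fun _ _ => abs_nonneg _) (Finset.mem_univ s)
  have hGbound : ∀ n : ℕ, |(G n : ℝ)| ≤ 2 * M := by
    intro n
    have : (G n : ℝ) = (f ((n : ℤ) : ZMod l) : ℝ) + (f (-((n : ℤ) : ZMod l)) : ℝ) := by
      rw [hG]; push_cast; ring
    rw [this]
    calc |(f ((n : ℤ) : ZMod l) : ℝ) + (f (-((n : ℤ) : ZMod l)) : ℝ)|
        ≤ |(f ((n : ℤ) : ZMod l) : ℝ)| + |(f (-((n : ℤ) : ZMod l)) : ℝ)| := abs_add_le _ _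
      _ ≤ M + M := add_le_add (hfM _) (hfM _)
      _ = 2 * M := by ring
  -- summability
  have hsumG : ∀ {x : ℝ}, 0 ≤ x → x < 1 → Summable fun n : ℕ => (G n : ℝ) * Real.log (1 - x ^ n) := by
    intro x hx0 hx1
    refine Summable.of_norm_bounded (g := fun n : ℕ => (2 * M * (1 - x)⁻¹) * x ^ n)
      ((summable_geometric_of_lt_one hx0 hx1).mul_left _) (fun n => ?_)
    rw [Real.norm_eq_abs, abs_mul]
    calc |(G n : ℝ)| * |Real.log (1 - x ^ n)|
        ≤ (2 * M) * ((1 - x)⁻¹ * x ^ n) := by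
          apply mul_le_mul (hGbound n) (abs_log_one_sub_pow_le hx0 hx1 n) (abs_nonneg _)
            (by linarith)
      _ = (2 * M * (1 - x)⁻¹) * x ^ n := by ring
  -- tail bound
  have tail : ∀ (k : ℕ) {x : ℝ}, 0 ≤ x → x < 1 →
      |∑' n : ℕ, (G (n + k) : ℝ) * Real.log (1 - x ^ (n + k))|
        ≤ (2 * M * (1 - x)⁻¹ * (1 - x)⁻¹) * x ^ k := by
    intro k x hx0 hx1
    have hx1' : 0 < 1 - x := by linarith
    have hbnd : ∀ n : ℕ, |(G (n + k) : ℝ) * Real.log (1 - x ^ (n + k))|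
        ≤ (2 * M * (1 - x)⁻¹ * x ^ k) * x ^ n := by
      intro n
      rw [abs_mul]
      calc |(G (n + k) : ℝ)| * |Real.log (1 - x ^ (n + k))|
          ≤ (2 * M) * ((1 - x)⁻¹ * x ^ (n + k)) := by
            apply mul_le_mul (hGbound _) (abs_log_one_sub_pow_le hx0 hx1 _) (abs_nonneg _)
              (by linarith)
        _ = (2 * M * (1 - x)⁻¹ * x ^ k) * x ^ n := by rw [pow_add]; ring
    have hs : Summable fun n : ℕ => (2 * M * (1 - x)⁻¹ * x ^ k) * x ^ n :=
      (summable_geometric_of_lt_one hx0 hx1).mul_left _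
    have habs : Summable fun n : ℕ => |(G (n + k) : ℝ) * Real.log (1 - x ^ (n + k))| :=
      hs.of_nonneg_of_le (fun n => abs_nonneg _) hbnd
    calc |∑' n : ℕ, (G (n + k) : ℝ) * Real.log (1 - x ^ (n + k))|
        ≤ ∑' n : ℕ, |(G (n + k) : ℝ) * Real.log (1 - x ^ (n + k))| := by
          exact norm_tsum_le_tsum_norm
            (f := fun n : ℕ => (G (n + k) : ℝ) * Real.log (1 - x ^ (n + k))) habs
      _ ≤ ∑' n : ℕ, (2 * M * (1 - x)⁻¹ * x ^ k) * x ^ n := Summable.tsum_le_tsum hbnd habs hs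
      _ = (2 * M * (1 - x)⁻¹ * x ^ k) * (1 - x)⁻¹ := by
          rw [tsum_mul_left, tsum_geometric_of_lt_one hx0 hx1]
      _ = (2 * M * (1 - x)⁻¹ * (1 - x)⁻¹) * x ^ k := by ring
  -- main equation
  have main : ∀ {x : ℝ}, 0 < x → x < 1 →
      A * Real.log x + ∑' n : ℕ, (G n : ℝ) * Real.log (1 - x ^ n) = 0 := by
    intro x hx0 hx1
    have h1 := main_real l f H hx0 hx1
    have e1 : ∀ r ∈ Finset.Icc (1 : ℤ) ((l : ℤ) - 1),
        (f (r : ZMod l) : ℝ) * (((l : ℝ) * bern ((r : ℝ) / (l : ℝ)) / 2) * Real.log x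
          + Slog l r x + Slog l (-r) x)
        = ((f (r : ZMod l) : ℝ) * ((l : ℝ) * bern ((r : ℝ) / (l : ℝ)) / 2)) * Real.log x
          + (f (r : ZMod l) : ℝ) * (Slog l r x + Slog l (-r) x) := fun r _ => by ring
    rw [Finset.sum_congr rfl e1, Finset.sum_add_distrib, ← Finset.sum_mul,
      collapse l hl f h0 hx0.le hx1] at h1
    exact h1
  -- step 1 : A = 0
  have hA0 : A = 0 := by
    by_contra hA0
    have hAabs : 0 < |A| := abs_pos.2 hA0
    set x : ℝ := min (1/2) (Real.exp (-(8 * M + 1) / |A|)) with hx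
    have hx0 : 0 < x := lt_min (by norm_num) (Real.exp_pos _)
    have hxhalf : x ≤ 1/2 := min_le_left _ _
    have hx1 : x < 1 := lt_of_le_of_lt hxhalf (by norm_num)
    have hmain := main hx0 hx1
    have hinv : (1 - x)⁻¹ ≤ 2 := by
      rw [show (2:ℝ) = ((1:ℝ)/2)⁻¹ by norm_num]
      apply inv_anti₀ (by norm_num)
      linarith
    have hT : |∑' n : ℕ, (G n : ℝ) * Real.log (1 - x ^ n)| ≤ 8 * M := by
      have h := tail 0 hx0.le hx1
      simp only [add_zero, pow_zero, mul_one] at h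
      refine h.trans ?_
      have h1 : 0 ≤ (1 - x)⁻¹ := inv_nonneg.2 (by linarith)
      have h2 : (1 - x)⁻¹ * (1 - x)⁻¹ ≤ 4 := by nlinarith
      nlinarith
    have hlogb : Real.log x ≤ -(8 * M + 1) / |A| := by
      calc Real.log x ≤ Real.log (Real.exp (-(8 * M + 1) / |A|)) :=
            Real.log_le_log hx0 (min_le_right _ _)
        _ = -(8 * M + 1) / |A| := Real.log_exp _
    have hlogneg : Real.log x < 0 := Real.log_neg hx0 hx1
    have h5 : 8 * M + 1 ≤ |A * Real.log x| := by
      rw [abs_mul]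
      have h6 : (8 * M + 1) / |A| ≤ |Real.log x| := by
        rw [abs_of_neg hlogneg]
        have : -(8 * M + 1) / |A| = -((8 * M + 1) / |A|) := by ring
        rw [this] at hlogb
        linarith
      calc 8 * M + 1 = |A| * ((8 * M + 1) / |A|) := by field_simp
        _ ≤ |A| * |Real.log x| := by
            apply mul_le_mul_of_nonneg_left h6 (abs_nonneg _)
    have h7 : A * Real.log x = -∑' n : ℕ, (G n : ℝ) * Real.log (1 - x ^ n) := by linarith
    rw [h7, abs_neg] at h5
    linarith
  -- step 2 : G ≡ 0
  have hG0 : ∀ n : ℕ, G n = 0 := by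
    by_contra hNe
    push_neg at hNe
    obtain ⟨n₁, hn₁⟩ := hNe
    have hex : ∃ n, G n ≠ 0 := ⟨n₁, hn₁⟩
    set N := Nat.find hex with hN
    have hGN : G N ≠ 0 := Nat.find_spec hex
    have hNpos : 0 < N := by
      rcases Nat.eq_zero_or_pos N with h | h
      · exfalso
        apply hGN
        rw [h, hG]
        simp [h0]
      · exact h
    set x : ℝ := (8 * M + 2)⁻¹ with hx
    have hx0 : 0 < x := by positivity
    have hxhalf : x ≤ 1/2 := by
      rw [hx, show (1:ℝ)/2 = (2:ℝ)⁻¹ by norm_num]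
      apply inv_anti₀ (by norm_num)
      linarith
    have hx1 : x < 1 := lt_of_le_of_lt hxhalf (by norm_num)
    have hinv : (1 - x)⁻¹ ≤ 2 := by
      rw [show (2:ℝ) = ((1:ℝ)/2)⁻¹ by norm_num]
      apply inv_anti₀ (by norm_num)
      linarith
    have hmain := main hx0 hx1
    rw [hA0, zero_mul, zero_add] at hmain
    have hsummand := hsumG hx0.le hx1
    have hsplit := Summable.sum_add_tsum_nat_add (f := fun n : ℕ => (G n : ℝ) * Real.log (1 - x ^ n))
      (N + 1) hsummand
    have hfin : ∑ i ∈ Finset.range (N + 1), (G i : ℝ) * Real.log (1 - x ^ i)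
        = (G N : ℝ) * Real.log (1 - x ^ N) := by
      rw [Finset.sum_range_succ, Finset.sum_eq_zero, zero_add]
      intro i hi
      have hGi : G i = 0 := by
        by_contra hcon
        exact (Nat.find_min hex (Finset.mem_range.1 hi)) hcon
      rw [hGi]
      simp
    rw [hmain, hfin] at hsplit
    have heq : (G N : ℝ) * Real.log (1 - x ^ N)
        = -∑' n : ℕ, (G (n + (N + 1)) : ℝ) * Real.log (1 - x ^ (n + (N + 1))) := by
      linarith
    have hxN0 : 0 ≤ x ^ N := pow_nonneg hx0.le N
    have hxN1 : x ^ N < 1 := pow_lt_one₀ hx0.le hx1 (by omega)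
    have hlb : |(G N : ℝ)| * x ^ N ≤ |(G N : ℝ) * Real.log (1 - x ^ N)| := by
      rw [abs_mul]
      apply mul_le_mul_of_nonneg_left _ (abs_nonneg _)
      have h1 := neg_log_one_sub_ge hxN0 hxN1
      have h2 : Real.log (1 - x ^ N) ≤ 0 := Real.log_nonpos (by linarith) (by linarith)
      rw [abs_of_nonpos h2]
      linarith
    have hub := tail (N + 1) hx0.le hx1
    rw [heq, abs_neg] at hlb
    have hcomb : |(G N : ℝ)| * x ^ N ≤ (2 * M * (1 - x)⁻¹ * (1 - x)⁻¹) * x ^ (N + 1) :=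
      hlb.trans hub
    have hGN1 : (1 : ℝ) ≤ |(G N : ℝ)| := by exact_mod_cast Int.one_le_abs hGN
    have hxNpos : 0 < x ^ N := pow_pos hx0 N
    have hfinal : (1 : ℝ) ≤ 8 * M * x := by
      have h1 : |(G N : ℝ)| * x ^ N ≤ (2 * M * (1 - x)⁻¹ * (1 - x)⁻¹ * x) * x ^ N := by
        rw [pow_succ] at hcomb
        calc |(G N : ℝ)| * x ^ N ≤ (2 * M * (1 - x)⁻¹ * (1 - x)⁻¹) * (x ^ N * x) := hcomb
          _ = (2 * M * (1 - x)⁻¹ * (1 - x)⁻¹ * x) * x ^ N := by ring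
      have h2 : |(G N : ℝ)| ≤ 2 * M * (1 - x)⁻¹ * (1 - x)⁻¹ * x :=
        le_of_mul_le_mul_right (by calc |(G N : ℝ)| * x ^ N ≤ _ := h1) hxNpos
      have h3 : 2 * M * (1 - x)⁻¹ * (1 - x)⁻¹ * x ≤ 2 * M * 2 * 2 * x := by
        have hpos : 0 ≤ (1 - x)⁻¹ := inv_nonneg.2 (by linarith)
        have h4 : (1 - x)⁻¹ * (1 - x)⁻¹ ≤ 4 := by nlinarith
        have h5 : 2 * M * ((1 - x)⁻¹ * (1 - x)⁻¹) ≤ 2 * M * 4 :=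
          mul_le_mul_of_nonneg_left h4 (by linarith)
        nlinarith [mul_le_mul_of_nonneg_right h5 hx0.le]
      calc (1:ℝ) ≤ |(G N : ℝ)| := hGN1
        _ ≤ 2 * M * (1 - x)⁻¹ * (1 - x)⁻¹ * x := h2
        _ ≤ 2 * M * 2 * 2 * x := h3
        _ = 8 * M * x := by ring
    rw [hx] at hfinal
    have h8 : 8 * M * (8 * M + 2)⁻¹ < 1 := by
      rw [mul_inv_lt_iff₀ (by linarith)]
      linarith
    linarith
  -- conclude
  intro s
  have hs := hG0 s.val
  simp only [hG] at hs
  have hcast : ((s.val : ℤ) : ZMod l) = s := by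
    push_cast
    exact ZMod.natCast_rightInverse s
  rw [hcast] at hs
  omega

/-- Supplement to Theorem 1: for `f : ℤ/lℤ → ℤ` with `f(0) = 0`, the product
`∏_{r=1}^{l-1} [r]_l^{f(r)}` is identically `1` if and only if `f` is odd. -/
theorem sl2z_invariant_units_stmt3 (l : ℕ) (hl : 1 ≤ l) (f : ZMod l → ℤ) (h0 : f 0 = 0) :
    (∀ z : UpperHalfPlane,
        ∏ r ∈ Finset.Icc (1 : ℤ) ((l : ℤ) - 1), rl l r z ^ f (r : ZMod l) = 1) ↔
      (∀ r : ZMod l, f (-r) = -f r) := by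
  constructor
  · intro H
    exact converse l hl f h0 H
  · intro hodd z
    exact forward l hl f hodd z
end
end

section
/- Let n ≥ 1 and l > 1 be integers and let p be the smallest prime divisor of l. If (ℤ/lℤ)^n contains a special point, then l ≤ ( 2·(1 + l^{1/n − 1}) / (1 − √(1/3 + 2/(3p²))) )^n, where l^{1/n−1} denotes the real power. In particular, for each fixed n there are only finitely many l such that (ℤ/lℤ)^n contains a special point. -/
open scoped Real

noncomputable section

/-- A point `P ∈ (ℤ/lℤ)^n` is special if for every divisor `t` of `l` and every integer `a`
coprime to `t` one has `Σ_j B(a_j·a/t) ≤ n/(6t²)`, where the `a_j` are integer lifts of the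
components of `P` (the condition does not depend on the lifts). -/
def IsSpecialPoint (l n : ℕ) (P : Fin n → ZMod l) : Prop :=
  ∀ a : Fin n → ℤ, (∀ j, ((a j : ZMod l) = P j)) →
    ∀ t : ℕ, t ∣ l → ∀ c : ℤ, Int.gcd c t = 1 →
      ∑ j, bern ((a j : ℝ) * (c : ℝ) / (t : ℝ)) ≤ (n : ℝ) / (6 * (t : ℝ) ^ 2)

lemma sqrt_facts (p : ℕ) (hp : 2 ≤ p) :
    Real.sqrt (1 / 3 + 2 / (3 * (p : ℝ) ^ 2)) < 1 ∧
    (1 : ℝ)/2 < Real.sqrt (1 / 3 + 2 / (3 * (p : ℝ) ^ 2)) ∧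
    Real.sqrt (1 / 3 + 2 / (3 * (p : ℝ) ^ 2)) ≤ Real.sqrt (1/2) := by
  have hpR : (2:ℝ) ≤ p := by exact_mod_cast hp
  have hp0 : (0:ℝ) < (p:ℝ)^2 := by positivity
  have harg0 : (0:ℝ) ≤ 1 / 3 + 2 / (3 * (p : ℝ) ^ 2) := by positivity
  have hargle : 1 / 3 + 2 / (3 * (p : ℝ) ^ 2) ≤ 1/2 := by
    have h6 : 2 / (3 * (p:ℝ)^2) ≤ 1/6 := by
      rw [div_le_div_iff₀ (by positivity) (by norm_num)]
      nlinarith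
    linarith
  have hs2 : (Real.sqrt (1 / 3 + 2 / (3 * (p : ℝ) ^ 2)))^2 = 1 / 3 + 2 / (3 * (p : ℝ) ^ 2) :=
    Real.sq_sqrt harg0
  have hs0 : 0 ≤ Real.sqrt (1 / 3 + 2 / (3 * (p : ℝ) ^ 2)) := Real.sqrt_nonneg _
  refine ⟨by nlinarith, by nlinarith [div_pos (by norm_num : (0:ℝ) < 2) (by positivity : (0:ℝ) < 3*(p:ℝ)^2)], Real.sqrt_le_sqrt hargle⟩

set_option maxHeartbeats 1000000 in
lemma special_claim (n : ℕ) (hn : 1 ≤ n) (l : ℕ) (hl : 1 < l) (P : Fin n → ZMod l)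
    (hP : IsSpecialPoint l n P) :
    (1 - Real.sqrt (1 / 3 + 2 / (3 * (l.minFac : ℝ) ^ 2))) / 2 ≤
      (l : ℝ) ^ (-(1 : ℝ) / n) + 1 / l := by
  by_contra hcon
  push_neg at hcon
  haveI : NeZero l := ⟨by omega⟩
  set p := l.minFac with hp_def
  have hppr : p.Prime := Nat.minFac_prime (by omega)
  have hp2 : 2 ≤ p := hppr.two_le
  have hpR : (2:ℝ) ≤ p := by exact_mod_cast hp2
  obtain ⟨hs_lt1, hs_gt, _⟩ := sqrt_facts p hp2
  set s : ℝ := Real.sqrt (1 / 3 + 2 / (3 * (p : ℝ) ^ 2)) with hs_def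
  have hs0 : 0 ≤ s := Real.sqrt_nonneg _
  have hs2 : s ^ 2 = 1 / 3 + 2 / (3 * (p:ℝ)^2) := Real.sq_sqrt (by positivity)
  set δ : ℝ := (1 - s) / 2 with hδ_def
  have hδpos : 0 < δ := by rw [hδ_def]; linarith only [hs_lt1]
  have hδlt : δ < 1/4 := by rw [hδ_def]; linarith only [hs_gt]
  have hlR : (2:ℝ) ≤ (l:ℝ) := by exact_mod_cast hl
  have hl0R : (0:ℝ) < (l:ℝ) := by linarith only [hlR]
  have hnR : (1:ℝ) ≤ (n:ℝ) := by exact_mod_cast hn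
  have hn0 : (n:ℝ) ≠ 0 := by linarith only [hnR]
  -- K
  set x : ℝ := (l:ℝ) * δ with hx_def
  have hx0 : 0 < x := by positivity
  have hceil1 : 1 ≤ ⌈x⌉₊ := Nat.one_le_ceil_iff.mpr hx0
  set K : ℕ := ⌈x⌉₊ - 1 with hK_def
  have hKcast : (K:ℝ) = (⌈x⌉₊:ℝ) - 1 := by
    rw [hK_def, Nat.cast_sub hceil1, Nat.cast_one]
  have hK_lt : (K:ℝ) < x := by
    rw [hKcast]; have := Nat.ceil_lt_add_one (le_of_lt hx0); linarith only [this]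
  have hK_ge : x - 1 ≤ (K:ℝ) := by
    rw [hKcast]; have := Nat.le_ceil x; linarith only [this]
  have hrpow_pos : (0:ℝ) < (l:ℝ) ^ (-(1:ℝ)/n) := Real.rpow_pos_of_pos hl0R _
  have hmul : (l:ℝ) * ((l:ℝ) ^ (-(1:ℝ)/n) + 1/l) = (l:ℝ) ^ (1 - (1:ℝ)/n) + 1 := by
    rw [mul_add, mul_one_div, div_self (ne_of_gt hl0R)]
    congr 1
    calc (l:ℝ) * (l:ℝ)^(-(1:ℝ)/n) = (l:ℝ)^(1:ℝ) * (l:ℝ)^(-(1:ℝ)/n) := by rw [Real.rpow_one]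
    _ = (l:ℝ)^(1 + -(1:ℝ)/n) := (Real.rpow_add hl0R _ _).symm
    _ = (l:ℝ)^(1 - (1:ℝ)/n) := by ring_nf
  have hKlb : (l:ℝ) ^ (1 - (1:ℝ)/n) < K := by
    have h1 : (l:ℝ) * ((l:ℝ)^(-(1:ℝ)/n) + 1/l) < x := by
      rw [hx_def]; exact (mul_lt_mul_iff_right₀ hl0R).mpr hcon
    rw [hmul] at h1
    linarith only [h1, hK_ge]
  have h_exp_nonneg : (0:ℝ) ≤ 1 - 1/(n:ℝ) := by
    have h1 : 1/(n:ℝ) ≤ 1 := by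
      rw [div_le_one (by linarith only [hnR])]; linarith only [hnR]
    linarith only [h1]
  have h_one_le_rpow : (1:ℝ) ≤ (l:ℝ)^(1 - (1:ℝ)/n) := by
    have := Real.rpow_le_rpow_of_exponent_le (by linarith only [hlR] : (1:ℝ) ≤ (l:ℝ))
      (by linarith only [h_exp_nonneg] : (0:ℝ) ≤ 1 - (1:ℝ)/n)
    rwa [Real.rpow_zero] at this
  -- box size
  set K' : ℕ := K / 2 with hK'_def
  set m : ℕ := 2 * K' + 1 with hm_def
  have hKm : K ≤ m := by omega
  have hm2K : 2 * K' ≤ K := by omega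
  have hml : m ≤ l := by
    have h1 : (K:ℝ) < (l:ℝ) := by
      calc (K:ℝ) < (l:ℝ)*δ := hK_lt
      _ < (l:ℝ) * 1 := by
          apply mul_lt_mul_of_pos_left _ hl0R
          linarith only [hδlt]
      _ = (l:ℝ) := mul_one _
    have : K < l := by exact_mod_cast h1
    omega
  -- pigeonhole
  have hval : ∀ (a : ZMod l), ((a.val : ℕ) : ZMod l) = a := ZMod.natCast_rightInverse
  have hcard : Fintype.card (Fin n → ZMod l) < Fintype.card (ZMod l × (Fin n → Fin m)) := by
    rw [Fintype.card_prod, Fintype.card_fun, Fintype.card_fun, ZMod.card, Fintype.card_fin,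
      Fintype.card_fin]
    have e1 : ((l:ℝ)^(1-(1:ℝ)/n))^(n:ℕ) = (l:ℝ)^((n:ℝ)-1) := by
      rw [← Real.rpow_natCast ((l:ℝ)^(1-(1:ℝ)/n)) n, ← Real.rpow_mul (le_of_lt hl0R)]
      congr 1
      field_simp
    have e2 : (l:ℝ) * (l:ℝ)^((n:ℝ)-1) = (l:ℝ)^(n:ℕ) := by
      rw [← Real.rpow_natCast (l:ℝ) n]
      calc (l:ℝ)*(l:ℝ)^((n:ℝ)-1) = (l:ℝ)^(1:ℝ) * (l:ℝ)^((n:ℝ)-1) := by rw [Real.rpow_one]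
      _ = (l:ℝ)^(1 + ((n:ℝ)-1)) := (Real.rpow_add hl0R _ _).symm
      _ = (l:ℝ)^(n:ℝ) := by ring_nf
    have hmgt : (l:ℝ)^(1-(1:ℝ)/n) < (m:ℝ) := by
      refine lt_of_lt_of_le hKlb ?_
      exact_mod_cast hKm
    have hpow : ((l:ℝ)^(1-(1:ℝ)/n))^(n:ℕ) < (m:ℝ)^(n:ℕ) := by
      exact pow_lt_pow_left₀ hmgt (le_of_lt (Real.rpow_pos_of_pos hl0R _)) (by omega)
    rw [e1] at hpow
    have hR : ((l:ℝ))^(n:ℕ) < (l:ℝ) * (m:ℝ)^(n:ℕ) := by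
      calc (l:ℝ)^(n:ℕ) = (l:ℝ) * (l:ℝ)^((n:ℝ)-1) := e2.symm
      _ < (l:ℝ) * (m:ℝ)^(n:ℕ) := by exact (mul_lt_mul_iff_right₀ hl0R).mpr hpow
    exact_mod_cast hR
  obtain ⟨u, v, huv, hfe⟩ := Fintype.exists_ne_map_eq_of_card_lt
    (fun (z : ZMod l × (Fin n → Fin m)) (j : Fin n) => P j * z.1 + ((z.2 j : ℕ) : ZMod l))
    hcard
  have hc_ne : u.1 ≠ v.1 := by
    intro hc
    apply huv
    have h2 : u.2 = v.2 := by
      funext j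
      have h0 := congrFun hfe j
      rw [hc] at h0
      have h3 : ((u.2 j : ℕ) : ZMod l) = ((v.2 j : ℕ) : ZMod l) := by
        exact add_left_cancel h0
      have h4 : (u.2 j : ℕ) = (v.2 j : ℕ) := by
        have h5 := congrArg ZMod.val h3
        rwa [ZMod.val_cast_of_lt (lt_of_lt_of_le (u.2 j).isLt hml),
             ZMod.val_cast_of_lt (lt_of_lt_of_le (v.2 j).isLt hml)] at h5
      exact Fin.ext h4
    exact Prod.ext hc h2
  set γ : ZMod l := u.1 - v.1 with hγ_def
  have hγ0 : γ ≠ 0 := sub_ne_zero.mpr hc_ne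
  set c₀ : ℕ := γ.val with hc₀_def
  have hc₀pos : 0 < c₀ := ZMod.val_pos.mpr hγ0
  have hc₀lt : c₀ < l := ZMod.val_lt γ
  have key : ∀ j : Fin n, ∃ mj : ℤ,
      ((P j).val : ℤ) * (c₀:ℤ) = (((v.2 j : ℕ) : ℤ) - ((u.2 j : ℕ) : ℤ)) + (l:ℤ) * mj := by
    intro j
    have h0 := congrFun hfe j
    have h1 : P j * γ = ((v.2 j : ℕ) : ZMod l) - ((u.2 j : ℕ) : ZMod l) := by
      rw [hγ_def, mul_sub]
      linear_combination h0
    have h2 : ((((P j).val : ℤ) * (c₀:ℤ) : ℤ) : ZMod l)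
        = (((((v.2 j : ℕ) : ℤ) - ((u.2 j : ℕ) : ℤ)) : ℤ) : ZMod l) := by
      push_cast [hval]
      rw [hc₀_def, hval]
      exact h1
    have h3 := ((ZMod.intCast_eq_intCast_iff _ _ _).mp h2).dvd
    obtain ⟨mj, hmj⟩ := h3
    exact ⟨-mj, by linear_combination -hmj⟩
  -- gcd setup
  set g : ℕ := Nat.gcd c₀ l with hg_def
  have hg0 : 0 < g := Nat.gcd_pos_of_pos_left _ hc₀pos
  have hgc : g ∣ c₀ := Nat.gcd_dvd_left _ _
  have hgl : g ∣ l := Nat.gcd_dvd_right _ _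
  set t : ℕ := l / g with ht_def
  have htdvd : t ∣ l := Nat.div_dvd_of_dvd hgl
  have htg : t * g = l := Nat.div_mul_cancel hgl
  have hgle : g ≤ c₀ := Nat.le_of_dvd hc₀pos hgc
  have ht2 : 2 ≤ t := by
    by_contra h
    push_neg at h
    interval_cases t
    · simp at htg; omega
    · simp at htg; omega
  have hpt : p ≤ t := Nat.minFac_le_of_dvd ht2 htdvd
  have htR : (p:ℝ) ≤ (t:ℝ) := by exact_mod_cast hpt
  have ht0R : (0:ℝ) < (t:ℝ) := by
    have h : (2:ℝ) ≤ (t:ℝ) := by exact_mod_cast ht2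
    linarith only [h]
  have hcop : Nat.Coprime (c₀ / g) t := Nat.coprime_div_gcd_div_gcd hg0
  have hspec := hP (fun j => ((P j).val : ℤ))
    (fun j => by push_cast [hval]; rfl)
    t htdvd ((c₀ / g : ℕ) : ℤ)
    (by rw [Int.gcd_natCast_natCast]; exact hcop)
  -- per-term lower bound
  have hgR : ((g:ℝ)) ≠ 0 := by positivity
  have hlne : ((l:ℝ)) ≠ 0 := ne_of_gt hl0R
  have hcast1 : ((c₀/g : ℕ) : ℝ) = (c₀ : ℝ) / (g:ℝ) := by
    rw [Nat.cast_div hgc hgR]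
  have hcast2 : ((t:ℕ):ℝ) = (l:ℝ)/(g:ℝ) := by
    rw [ht_def, Nat.cast_div hgl hgR]
  have hterm : ∀ j : Fin n,
      1 / (6 * (t:ℝ)^2) < bern ((((P j).val:ℤ):ℝ) * (((c₀/g:ℕ):ℤ):ℝ) / (t:ℝ)) := by
    intro j
    obtain ⟨mj, hmj⟩ := key j
    set e : ℤ := ((v.2 j : ℕ) : ℤ) - ((u.2 j : ℕ) : ℤ) with he_def
    have he_bound : |e| ≤ (2 * K' : ℤ) := by
      have h1 : (u.2 j : ℕ) < m := (u.2 j).isLt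
      have h2 : (v.2 j : ℕ) < m := (v.2 j).isLt
      rw [he_def, abs_le]
      omega
    have hmjR : ((P j).val : ℝ) * (c₀:ℝ) = (e:ℝ) + (l:ℝ)*(mj:ℝ) := by exact_mod_cast hmj
    have harg : (((P j).val:ℤ):ℝ) * (((c₀/g:ℕ):ℤ):ℝ) / (t:ℝ) = (e:ℝ)/(l:ℝ) + (mj:ℝ) := by
      rw [Int.cast_natCast, Int.cast_natCast, hcast1, hcast2]
      have step1 : ((P j).val:ℝ) * ((c₀:ℝ)/(g:ℝ)) / ((l:ℝ)/(g:ℝ)) = ((P j).val:ℝ) * (c₀:ℝ) / (l:ℝ) := by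
        field_simp
      rw [step1, hmjR, add_div, mul_div_cancel_left₀ _ hlne]
    rw [harg]
    have hbshift : bern ((e:ℝ)/(l:ℝ) + (mj:ℝ)) = bern ((e:ℝ)/(l:ℝ)) := by
      unfold bern
      rw [Int.fract_add_intCast]
    rw [hbshift]
    -- |e|/l < δ
    have heabs : |(e:ℝ)| ≤ (K:ℝ) := by
      have h3 : ((2*K':ℕ):ℝ) ≤ (K:ℝ) := by exact_mod_cast hm2K
      have h2 : |(e:ℝ)| ≤ ((2*K' : ℕ):ℝ) := by
        rw [← Int.cast_abs]
        exact_mod_cast he_bound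
      linarith only [h2, h3]
    set wv : ℝ := |(e:ℝ)|/(l:ℝ) with hwv_def
    have hwv0 : 0 ≤ wv := by positivity
    have hwv_lt : wv < δ := by
      rw [hwv_def, div_lt_iff₀ hl0R]
      calc |(e:ℝ)| ≤ (K:ℝ) := heabs
      _ < (l:ℝ) * δ := hK_lt
      _ = δ * (l:ℝ) := mul_comm _ _
    have he_lt_l : |(e:ℝ)| < (l:ℝ) := by
      calc |(e:ℝ)| ≤ (K:ℝ) := heabs
      _ < (l:ℝ)*δ := hK_lt
      _ < (l:ℝ)*1 := by apply mul_lt_mul_of_pos_left _ hl0R; linarith only [hδlt]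
      _ = (l:ℝ) := mul_one _
    have hfract : bern ((e:ℝ)/(l:ℝ)) = wv^2 - wv + 1/6 := by
      rcases le_or_gt 0 e with hcase | hcase
      · have he0 : (0:ℝ) ≤ (e:ℝ) := by exact_mod_cast hcase
        have habs : |(e:ℝ)| = (e:ℝ) := abs_of_nonneg he0
        have hlt1 : (e:ℝ)/(l:ℝ) < 1 := by
          rw [div_lt_one hl0R]
          calc (e:ℝ) = |(e:ℝ)| := habs.symm
          _ < (l:ℝ) := he_lt_l
        rw [bern, Int.fract_eq_self.mpr ⟨by positivity, hlt1⟩, hwv_def, habs]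
      · have he0 : (e:ℝ) < 0 := by exact_mod_cast hcase
        have habs : |(e:ℝ)| = -(e:ℝ) := abs_of_neg he0
        have hfr : Int.fract ((e:ℝ)/(l:ℝ)) = (e:ℝ)/(l:ℝ) + 1 := by
          have h2 := Int.fract_add_intCast ((e:ℝ)/(l:ℝ)) 1
          rw [Int.cast_one] at h2
          rw [← h2, Int.fract_eq_self]
          have hel : -(e:ℝ) < (l:ℝ) := by rw [← habs]; exact he_lt_l
          constructor
          · rw [div_add_one hlne]
            apply div_nonneg _ (le_of_lt hl0R)
            linarith only [hel]
          · have : (e:ℝ)/(l:ℝ) < 0 := div_neg_of_neg_of_pos he0 hl0R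
            linarith only [this]
        have hew : (e:ℝ)/(l:ℝ) = -wv := by
          rw [hwv_def, habs]
          ring
        rw [bern, hfr, hew, hwv_def, habs]
        ring
    rw [hfract]
    have h16 : 1/(6*(p:ℝ)^2) = (s^2 - 1/3)/4 := by
      rw [hs2]
      field_simp
      ring
    have h1 : 1/(6*(t:ℝ)^2) ≤ 1/(6*(p:ℝ)^2) := by
      apply one_div_le_one_div_of_le (by positivity)
      nlinarith only [htR, hpR]
    have hfinal : 1/(6*(p:ℝ)^2) < wv^2 - wv + 1/6 := by
      rw [h16]
      have hδw : 0 < 1 - 2*wv - s := by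
        rw [hδ_def] at hwv_lt; linarith only [hwv_lt]
      have hδw2 : 0 < 1 - 2*wv + s := by linarith only [hδw, hs0]
      have hprod := mul_pos hδw hδw2
      have hexp : (1 - 2*wv - s)*(1 - 2*wv + s) = 1 - 4*wv + 4*wv^2 - s^2 := by ring
      rw [hexp] at hprod
      linarith only [hprod]
    linarith only [h1, hfinal]
  -- sum contradiction
  have hne : (Finset.univ : Finset (Fin n)).Nonempty := ⟨⟨0, by omega⟩, Finset.mem_univ _⟩
  have hlb : (n:ℝ)/(6*(t:ℝ)^2) < ∑ j, bern ((((P j).val:ℤ):ℝ) * (((c₀/g:ℕ):ℤ):ℝ) / (t:ℝ)) := by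
    calc (n:ℝ)/(6*(t:ℝ)^2) = ∑ _j : Fin n, 1/(6*(t:ℝ)^2) := by
          rw [Finset.sum_const, Finset.card_univ, Fintype.card_fin, nsmul_eq_mul]
          ring
    _ < _ := Finset.sum_lt_sum_of_nonempty hne (fun j _ => hterm j)
  exact absurd hspec (not_le.mpr hlb)


set_option maxHeartbeats 1000000 in
/-- If `(ℤ/lℤ)^n` with `l > 1` contains a special point then
`l ≤ (2(1 + l^{1/n − 1}) / (1 − √(1/3 + 2/(3p²))))^n` with `p` the smallest prime divisor
of `l`; in particular, for fixed `n` only finitely many `l ≥ 1` admit special points. -/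
theorem sl2z_invariant_units_stmt6 (n : ℕ) (hn : 1 ≤ n) :
    (∀ l : ℕ, 1 < l → (∃ P : Fin n → ZMod l, IsSpecialPoint l n P) →
      (l : ℝ) ≤ ((2 * (1 + (l : ℝ) ^ ((1 : ℝ) / n - 1))) /
        (1 - Real.sqrt (1 / 3 + 2 / (3 * (l.minFac : ℝ) ^ 2)))) ^ n) ∧
    {l : ℕ | 1 ≤ l ∧ ∃ P : Fin n → ZMod l, IsSpecialPoint l n P}.Finite := by
  have hnR : (1:ℝ) ≤ (n:ℝ) := by exact_mod_cast hn
  have hn0 : (n:ℝ) ≠ 0 := by linarith only [hnR]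
  have hl_eq : ∀ l : ℕ, 1 < l → (l:ℝ) = ((l:ℝ)^((1:ℝ)/n))^(n:ℕ) := by
    intro l hl
    have hl0R : (0:ℝ) < (l:ℝ) := by
      have : (2:ℝ) ≤ (l:ℝ) := by exact_mod_cast hl
      linarith only [this]
    rw [← Real.rpow_natCast ((l:ℝ)^((1:ℝ)/n)) n, ← Real.rpow_mul (le_of_lt hl0R)]
    have hexp : (1:ℝ)/n * (n:ℕ) = 1 := by field_simp
    rw [hexp, Real.rpow_one]
  constructor
  · rintro l hl ⟨P, hP⟩
    have hclaim := special_claim n hn l hl P hP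
    have hppr : l.minFac.Prime := Nat.minFac_prime (by omega)
    obtain ⟨hs_lt1, hs_gt, _⟩ := sqrt_facts l.minFac hppr.two_le
    set s : ℝ := Real.sqrt (1 / 3 + 2 / (3 * (l.minFac : ℝ) ^ 2)) with hs_def
    have hδpos : (0:ℝ) < (1 - s)/2 := by linarith only [hs_lt1]
    have hl0R : (0:ℝ) < (l:ℝ) := by
      have : (2:ℝ) ≤ (l:ℝ) := by exact_mod_cast hl
      linarith only [this]
    have hstep : (l:ℝ)^((1:ℝ)/n) ≤ (2 * (1 + (l:ℝ)^((1:ℝ)/n - 1))) / (1 - s) := by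
      have h2 : (2 * (1 + (l:ℝ)^((1:ℝ)/n - 1))) / (1 - s)
          = (1 + (l:ℝ)^((1:ℝ)/n - 1)) / ((1 - s)/2) := by
        field_simp
      rw [h2, le_div_iff₀ hδpos]
      have h3 : (l:ℝ)^((1:ℝ)/n) * ((1 - s)/2)
          ≤ (l:ℝ)^((1:ℝ)/n) * ((l:ℝ)^(-(1:ℝ)/n) + 1/(l:ℝ)) := by
        apply mul_le_mul_of_nonneg_left hclaim
        exact le_of_lt (Real.rpow_pos_of_pos hl0R _)
      have h4 : (l:ℝ)^((1:ℝ)/n) * ((l:ℝ)^(-(1:ℝ)/n) + 1/(l:ℝ))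
          = 1 + (l:ℝ)^((1:ℝ)/n - 1) := by
        rw [mul_add]
        congr 1
        · rw [← Real.rpow_add hl0R,
            show (1:ℝ)/(n:ℝ) + -(1:ℝ)/(n:ℝ) = 0 from by ring]
          exact Real.rpow_zero _
        · rw [one_div (l:ℝ), ← Real.rpow_neg_one (l:ℝ), ← Real.rpow_add hl0R,
            show (1:ℝ)/(n:ℝ) + -1 = (1:ℝ)/(n:ℝ) - 1 from by ring]
      rw [h4] at h3
      linarith only [h3]
    calc (l:ℝ) = ((l:ℝ)^((1:ℝ)/n))^(n:ℕ) := hl_eq l hl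
    _ ≤ _ := by
        apply pow_le_pow_left₀ (le_of_lt (Real.rpow_pos_of_pos hl0R _)) hstep
  · set d0 : ℝ := (1 - Real.sqrt (1/2))/2 with hd0_def
    have hsq : Real.sqrt (1/2) < 1 := by
      have h1 : (Real.sqrt (1/2))^2 = 1/2 := Real.sq_sqrt (by norm_num)
      nlinarith only [h1, Real.sqrt_nonneg (1/2:ℝ)]
    have hd0 : 0 < d0 := by rw [hd0_def]; linarith only [hsq]
    apply Set.Finite.subset (Set.finite_Iic (⌈max ((2/d0)^n) 1⌉₊))
    rintro l ⟨hl1, P, hP⟩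
    simp only [Set.mem_Iic]
    have hfin : (l:ℝ) ≤ max ((2/d0)^n) 1 := by
      rcases eq_or_lt_of_le hl1 with h1 | h1
      · rw [← h1]
        simpa using le_max_right ((2/d0)^n) 1
      · have hclaim := special_claim n hn l h1 P hP
        have hppr : l.minFac.Prime := Nat.minFac_prime (by omega)
        obtain ⟨hs_lt1, _, hs_le⟩ := sqrt_facts l.minFac hppr.two_le
        set s : ℝ := Real.sqrt (1 / 3 + 2 / (3 * (l.minFac : ℝ) ^ 2)) with hs_def
        have hlR : (2:ℝ) ≤ (l:ℝ) := by exact_mod_cast h1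
        have hl0R : (0:ℝ) < (l:ℝ) := by linarith only [hlR]
        have hl1R : (1:ℝ) ≤ (l:ℝ) := by linarith only [hlR]
        have hd0δ : d0 ≤ (1 - s)/2 := by rw [hd0_def]; linarith only [hs_le]
        have h1l : 1/(l:ℝ) ≤ (l:ℝ)^(-(1:ℝ)/n) := by
          rw [one_div, ← Real.rpow_neg_one (l:ℝ)]
          apply Real.rpow_le_rpow_of_exponent_le hl1R
          rw [neg_div]
          rw [neg_le_neg_iff]
          rw [div_le_one (by linarith only [hnR])]
          exact hnR
        have hd0le : d0 ≤ 2 * (l:ℝ)^(-(1:ℝ)/n) := by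
          linarith only [hclaim, hd0δ, h1l]
        have hstep : (l:ℝ)^((1:ℝ)/n) ≤ 2/d0 := by
          rw [le_div_iff₀ hd0]
          have h3 : (l:ℝ)^((1:ℝ)/n) * d0 ≤ (l:ℝ)^((1:ℝ)/n) * (2 * (l:ℝ)^(-(1:ℝ)/n)) := by
            apply mul_le_mul_of_nonneg_left hd0le
            exact le_of_lt (Real.rpow_pos_of_pos hl0R _)
          have h4 : (l:ℝ)^((1:ℝ)/n) * (2 * (l:ℝ)^(-(1:ℝ)/n)) = 2 := by
            rw [mul_comm (2:ℝ) _, ← mul_assoc, ← Real.rpow_add hl0R,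
              show (1:ℝ)/(n:ℝ) + -(1:ℝ)/(n:ℝ) = 0 from by ring, Real.rpow_zero, one_mul]
          rw [h4] at h3
          exact h3
        have : (l:ℝ) ≤ (2/d0)^n := by
          calc (l:ℝ) = ((l:ℝ)^((1:ℝ)/n))^(n:ℕ) := hl_eq l h1
          _ ≤ _ := pow_le_pow_left₀ (le_of_lt (Real.rpow_pos_of_pos hl0R _)) hstep n
        exact le_trans this (le_max_left _ _)
    have := le_trans hfin (Nat.le_ceil _)
    exact_mod_cast this
end
end

section
/- Let n ≥ 1 and l ≥ 2 be integers and let P ∈ (ℤ/lℤ)^n. Then there exist an integer b not divisible by l and integers b₁, …, b_n with |b_j| ≤ l^{1−1/n} + 1 for every j (where l^{1−1/n} denotes the real power), such that b·P = (b₁ mod l, …, b_n mod l), i.e. b times the j-th component of P equals the residue class of b_j modulo l for every j. -/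
/-!
Pigeonhole (Dirichlet's box principle). Put `s = ⌊l^{1-1/n}⌋`, so that `(s+1)^n > l^{n-1}`.
The `l·(s+1)^n > l^n` points `a•P + v`, with `a ∈ ℤ/lℤ` and `v` in the box of residues
`0, …, s`, cannot all be distinct in `(ℤ/lℤ)^n`. A collision `a•P + v = a'•P + v'` forces
`a ≠ a'`, and then `b = a - a'` and `c = v' - v` work, with `|c_j| ≤ s ≤ l^{1-1/n}`.
-/

open Finset

theorem exists_ne_sub_smul_eq_sub_of_card_lt {R M : Type*} [Ring R] [Fintype R]
    [AddCommGroup M] [Module R M] [Fintype M] (P : M) (V : Finset M)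
    (h : Fintype.card M < Fintype.card R * #V) :
    ∃ a a' : R, a ≠ a' ∧ ∃ v ∈ V, ∃ v' ∈ V, (a - a') • P = v' - v := by
  obtain ⟨⟨a, v⟩, hav, ⟨a', v'⟩, hav', hne, heq⟩ :=
    exists_ne_map_eq_of_card_lt_of_maps_to (s := univ ×ˢ V) (t := univ)
      (f := fun p : R × M => p.1 • P + p.2) (by simpa [card_product] using h)
      (fun _ _ => mem_coe.2 (mem_univ _))
  simp only [mem_product] at hav hav'
  refine ⟨a, a', fun haa' => hne ?_, v, hav.2, v', hav'.2, ?_⟩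
  · subst haa'
    exact Prod.ext rfl (add_left_cancel heq)
  · rw [sub_smul, sub_eq_sub_iff_add_eq_add, add_comm v']
    exact heq

namespace ZMod

theorem card_image_natCast_range {l s : ℕ} (h : s ≤ l) :
    #((range s).image (Nat.cast : ℕ → ZMod l)) = s := by
  rw [card_image_of_injOn, card_range]
  intro a ha b hb hab
  have ha : a < l := (mem_range.1 ha).trans_le h
  have hb : b < l := (mem_range.1 hb).trans_le h
  rw [← val_cast_of_lt ha, ← val_cast_of_lt hb, hab]

theorem val_lt_of_mem_image_natCast_range {l s : ℕ} (h : s ≤ l) {z : ZMod l}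
    (hz : z ∈ (range s).image (Nat.cast : ℕ → ZMod l)) : z.val < s := by
  obtain ⟨k, hk, rfl⟩ := mem_image.1 hz
  rw [val_cast_of_lt ((mem_range.1 hk).trans_le h)]
  exact mem_range.1 hk

end ZMod

theorem Real.rpow_one_sub_one_div_pow {x : ℝ} (hx : 0 ≤ x) {n : ℕ} (hn : n ≠ 0) :
    (x ^ (1 - (1 : ℝ) / n)) ^ n = x ^ (n - 1) := by
  have hexp : (1 - (1 : ℝ) / n) * n = ((n - 1 : ℕ) : ℝ) := by
    rw [Nat.cast_pred (Nat.pos_of_ne_zero hn)]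
    field_simp
  rw [← rpow_natCast, ← rpow_mul hx, hexp, rpow_natCast]

theorem pow_lt_mul_floor_rpow_add_one_pow {l n : ℕ} (hl : 0 < l) (hn : n ≠ 0) :
    l ^ n < l * (⌊(l : ℝ) ^ (1 - (1 : ℝ) / n)⌋₊ + 1) ^ n := by
  set x : ℝ := (l : ℝ) ^ (1 - (1 : ℝ) / n)
  have hx : 0 ≤ x := by positivity
  have hlt : ((l ^ (n - 1) : ℕ) : ℝ) < ((⌊x⌋₊ + 1) ^ n : ℕ) := by
    push_cast
    rw [← Real.rpow_one_sub_one_div_pow (Nat.cast_nonneg l) hn]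
    exact pow_lt_pow_left₀ (Nat.lt_floor_add_one x) hx hn
  calc l ^ n = l * l ^ (n - 1) := by rw [← pow_succ', Nat.sub_add_cancel (Nat.pos_of_ne_zero hn)]
    _ < l * (⌊x⌋₊ + 1) ^ n := Nat.mul_lt_mul_of_pos_left (by exact_mod_cast hlt) hl

/-- For every point `P ∈ (ℤ/lℤ)^n` (`l ≥ 2`, `n ≥ 1`) there is an integer `b` not divisible
by `l` such that `b·P` has integer lifts `b₁,…,b_n` with `|b_j| ≤ l^{1−1/n} + 1`. -/
theorem sl2z_invariant_units_stmt7 (n l : ℕ) (hn : 1 ≤ n) (hl : 2 ≤ l)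
    (P : Fin n → ZMod l) :
    ∃ b : ℤ, ¬ (l : ℤ) ∣ b ∧ ∃ c : Fin n → ℤ,
      (∀ j, (|c j| : ℝ) ≤ (l : ℝ) ^ (1 - (1 : ℝ) / n) + 1) ∧
      ∀ j, (b : ZMod l) * P j = ((c j : ℤ) : ZMod l) := by
  have : NeZero l := ⟨by omega⟩
  set x : ℝ := (l : ℝ) ^ (1 - (1 : ℝ) / n)
  set D := (range (⌊x⌋₊ + 1)).image (Nat.cast : ℕ → ZMod l)
  have hx : 0 ≤ x := by positivity
  have hfloor : ⌊x⌋₊ + 1 ≤ l := (Nat.floor_lt hx).2 <| Real.rpow_lt_self_of_one_lt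
    (by exact_mod_cast hl) (sub_lt_self 1 (one_div_pos.2 (by exact_mod_cast hn)))
  have hcard : Fintype.card (Fin n → ZMod l) <
      Fintype.card (ZMod l) * #(Fintype.piFinset fun _ : Fin n => D) := by
    rw [Fintype.card_fun, Fintype.card_piFinset_const, ZMod.card_image_natCast_range hfloor,
      ZMod.card, Fintype.card_fin]
    exact pow_lt_mul_floor_rpow_add_one_pow (by omega : 0 < l) (by omega : n ≠ 0)
  obtain ⟨a, a', hne, v, hv, v', hv', heq⟩ := exists_ne_sub_smul_eq_sub_of_card_lt P _ hcard
  refine ⟨(a - a').val, ?_, fun j => (v' j).val - (v j).val, fun j => ?_, fun j => ?_⟩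
  · rw [← ZMod.intCast_zmod_eq_zero_iff_dvd]
    simpa [sub_eq_zero] using hne
  · have h := ZMod.val_lt_of_mem_image_natCast_range hfloor (Fintype.mem_piFinset.1 hv j)
    have h' := ZMod.val_lt_of_mem_image_natCast_range hfloor (Fintype.mem_piFinset.1 hv' j)
    have hc : |((v' j).val : ℤ) - (v j).val| ≤ ⌊x⌋₊ := abs_sub_le_iff.2 ⟨by omega, by omega⟩
    calc (|(((v' j).val - (v j).val : ℤ) : ℝ)|) = ((|((v' j).val : ℤ) - (v j).val| : ℤ) : ℝ) :=
          (Int.cast_abs).symm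
      _ ≤ ⌊x⌋₊ := by exact_mod_cast hc
      _ ≤ x + 1 := by linarith [Nat.floor_le hx]
  · simpa using congrFun heq j
end

section
/- Let S be a finite non-empty set of functions on the upper half plane ℍ such that: (i) for every f ∈ S and every A ∈ SL(2,ℤ) there exist a real number ord(f,A) and a nonzero complex constant κ such that f(Az)·exp(−2πi·ord(f,A)·z) → κ as z = it with real t → ∞; and (ii) the complex vector space spanned by the elements of S is invariant under f ↦ (z ↦ f(Az)) for every A ∈ SL(2,ℤ). Then for all A, B ∈ SL(2,ℤ), min_{f∈S} ord(f,A) = min_{f∈S} ord(f,B); that is, the function assigning to each cusp s = A∞ the value min_{f∈S} ord(f,A) is constant on ℚ ∪ {∞}. -/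
open Complex Filter Topology UpperHalfPlane Matrix MatrixGroups
open scoped Real

noncomputable section

/-- The point `i·max t 1` on the imaginary axis of the upper half plane (equal to `it` for
`t ≥ 1`). -/
def iPt (t : ℝ) : UpperHalfPlane :=
  ⟨⟨0, max t 1⟩, lt_of_lt_of_le one_pos (le_max_right t 1)⟩

/-- auxiliary real exponential factor -/
def E (r t : ℝ) : ℝ := Real.exp (2 * π * r * max t 1)

lemma iPt_coe (t : ℝ) : ((iPt t : UpperHalfPlane) : ℂ) = ((max t 1 : ℝ) : ℂ) * Complex.I := by
  apply Complex.ext <;> simp [iPt, UpperHalfPlane.coe]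

lemma exp_eq_E (r t : ℝ) :
    Complex.exp (-(2 * (π : ℂ) * Complex.I * ((r : ℝ) : ℂ) * ((iPt t : ℂ)))) = ((E r t : ℝ) : ℂ) := by
  rw [iPt_coe, E, Complex.ofReal_exp]
  congr 1
  push_cast
  linear_combination (-(2 * (π : ℂ) * r * (max t 1 : ℝ))) * Complex.I_sq

lemma E_mul (a b t : ℝ) : E a t * E b t = E (a + b) t := by
  rw [E, E, E, ← Real.exp_add]; ring_nf

lemma max_tendsto : Tendsto (fun t : ℝ => max t 1) atTop atTop :=
  tendsto_atTop_mono (fun t => le_max_left t 1) tendsto_id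

lemma E_tendsto_zero {r : ℝ} (hr : r < 0) : Tendsto (fun t => E r t) atTop (nhds 0) := by
  have h : Tendsto (fun t : ℝ => 2 * π * r * max t 1) atTop atBot := by
    have h2 : 2 * π * r < 0 := mul_neg_of_pos_of_neg (by positivity) hr
    exact (tendsto_const_mul_atBot_of_neg h2).2 max_tendsto
  exact Real.tendsto_exp_atBot.comp h

lemma E_tendsto_atTop {r : ℝ} (hr : 0 < r) : Tendsto (fun t => E r t) atTop atTop := by
  have h : Tendsto (fun t : ℝ => 2 * π * r * max t 1) atTop atTop :=
    (max_tendsto).const_mul_atTop (by positivity)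
  exact Real.tendsto_exp_atTop.comp h

/-- Key one-sided lemma. -/
lemma key_le (S : Finset (UpperHalfPlane → ℂ)) (hS : S.Nonempty)
    (ord : (UpperHalfPlane → ℂ) → SL(2, ℤ) → ℝ)
    (h1 : ∀ f ∈ S, ∀ A : SL(2, ℤ), ∃ κ : ℂ, κ ≠ 0 ∧
      Filter.Tendsto
        (fun t : ℝ => f (A • iPt t) *
          Complex.exp (-(2 * (π : ℂ) * Complex.I * ((ord f A : ℝ) : ℂ) * ((iPt t : ℂ)))))
        Filter.atTop (nhds κ))
    (h2 : ∀ A : SL(2, ℤ), ∀ f ∈ Submodule.span ℂ (S : Set (UpperHalfPlane → ℂ)),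
      (fun z => f (A • z)) ∈ Submodule.span ℂ (S : Set (UpperHalfPlane → ℂ)))
    (A B : SL(2, ℤ)) :
    S.inf' hS (fun f => ord f A) ≤ S.inf' hS (fun f => ord f B) := by
  set mA := S.inf' hS (fun f => ord f A) with hmA
  rw [Finset.le_inf'_iff]
  intro f hf
  by_contra hcon
  push_neg at hcon
  -- the function z ↦ f (B • z) is in the span of S
  have hfspan : (fun z => f ((B * A⁻¹) • z)) ∈ Submodule.span ℂ (S : Set (UpperHalfPlane → ℂ)) :=
    h2 (B * A⁻¹) f (Submodule.subset_span hf)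
  obtain ⟨c, -, hc⟩ := Submodule.mem_span_finset.1 hfspan
  -- rewrite h1 using E
  have h1' : ∀ g ∈ S, ∀ C : SL(2, ℤ), ∃ κ : ℂ, κ ≠ 0 ∧
      Tendsto (fun t : ℝ => g (C • iPt t) * ((E (ord g C) t : ℝ) : ℂ)) atTop (nhds κ) := by
    intro g hg C
    obtain ⟨κ, hκ, hten⟩ := h1 g hg C
    refine ⟨κ, hκ, ?_⟩
    have : (fun t : ℝ => g (C • iPt t) * ((E (ord g C) t : ℝ) : ℂ)) =
        (fun t : ℝ => g (C • iPt t) *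
          Complex.exp (-(2 * (π : ℂ) * Complex.I * ((ord g C : ℝ) : ℂ) * ((iPt t : ℂ))))) := by
      funext t; rw [exp_eq_E]
    rw [this]; exact hten
  -- each summand g of the combination, multiplied by E mA, converges
  have hterm : ∀ g ∈ S, ∃ L : ℂ,
      Tendsto (fun t : ℝ => c g * g (A • iPt t) * ((E mA t : ℝ) : ℂ)) atTop (nhds L) := by
    intro g hg
    obtain ⟨κ, _, hten⟩ := h1' g hg A
    have hle : mA ≤ ord g A := Finset.inf'_le _ hg
    have heq : ∀ t : ℝ, c g * g (A • iPt t) * ((E mA t : ℝ) : ℂ) =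
        c g * (g (A • iPt t) * ((E (ord g A) t : ℝ) : ℂ)) * ((E (mA - ord g A) t : ℝ) : ℂ) := by
      intro t
      have : ((E (ord g A) t : ℝ) : ℂ) * ((E (mA - ord g A) t : ℝ) : ℂ) = ((E mA t : ℝ) : ℂ) := by
        rw [← Complex.ofReal_mul, E_mul]; norm_num
      rw [← this]; ring
    rcases eq_or_lt_of_le hle with heql | hlt
    · refine ⟨c g * κ * 1, ?_⟩
      simp only [heq]
      refine (Tendsto.mul (tendsto_const_nhds.mul hten) ?_)
      have : mA - ord g A = 0 := by rw [heql]; ring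
      rw [this]
      simp [E]
    · refine ⟨c g * κ * 0, ?_⟩
      simp only [heq]
      refine (Tendsto.mul (tendsto_const_nhds.mul hten) ?_)
      have h0 : Tendsto (fun t => E (mA - ord g A) t) atTop (nhds 0) :=
        E_tendsto_zero (by linarith)
      have := (Complex.continuous_ofReal.tendsto 0).comp h0
      simpa [Function.comp_def] using this
  -- hence f(B • iPt t) * E mA t converges
  choose L hL using hterm
  have hsum : Tendsto (fun t : ℝ => ∑ g ∈ S, (c g * g (A • iPt t) * ((E mA t : ℝ) : ℂ)))
      atTop (nhds (∑ g ∈ S.attach, L g g.2)) := by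
    have := tendsto_finset_sum (S.attach)
      (fun g _ => hL g.1 g.2)
    convert this using 2 with t
    rw [← Finset.sum_attach S (fun g => c g * g (A • iPt t) * ((E mA t : ℝ) : ℂ))]
  have hFB : ∀ t : ℝ, f (B • iPt t) = ∑ g ∈ S, c g * g (A • iPt t) := by
    intro t
    have h₁ : (∑ g ∈ S, c g • g) (A • iPt t) = ∑ g ∈ S, c g * g (A • iPt t) := by
      rw [Finset.sum_apply]; rfl
    have h₂ : f ((B * A⁻¹) • (A • iPt t)) = f (B • iPt t) := by
      rw [smul_smul, inv_mul_cancel_right]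
    rw [← h₂, ← h₁, hc]
  have hconv : Tendsto (fun t : ℝ => f (B • iPt t) * ((E mA t : ℝ) : ℂ)) atTop
      (nhds (∑ g ∈ S.attach, L g g.2)) := by
    have : (fun t : ℝ => f (B • iPt t) * ((E mA t : ℝ) : ℂ)) =
        (fun t : ℝ => ∑ g ∈ S, (c g * g (A • iPt t) * ((E mA t : ℝ) : ℂ))) := by
      funext t; rw [hFB t, Finset.sum_mul]
    rw [this]; exact hsum
  -- but f(B • iPt t) * E (ord f B) t → κ ≠ 0 with ord f B < mA, contradiction
  obtain ⟨κ, hκ, hten⟩ := h1' f hf B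
  have hnorm : Tendsto (fun t : ℝ => ‖f (B • iPt t) * ((E (ord f B) t : ℝ) : ℂ)‖ *
      E (mA - ord f B) t) atTop atTop := by
    refine Filter.Tendsto.pos_mul_atTop (norm_pos_iff.2 hκ) (hten.norm) ?_
    exact E_tendsto_atTop (by linarith)
  have heq2 : ∀ t : ℝ, ‖f (B • iPt t) * ((E (ord f B) t : ℝ) : ℂ)‖ * E (mA - ord f B) t =
      ‖f (B • iPt t) * ((E mA t : ℝ) : ℂ)‖ := by
    intro t
    have hpos : (0:ℝ) ≤ E (mA - ord f B) t := le_of_lt (Real.exp_pos _)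
    rw [← Real.norm_of_nonneg hpos, ← Complex.norm_real, ← norm_mul]
    congr 1
    have : ((E (ord f B) t : ℝ) : ℂ) * ((E (mA - ord f B) t : ℝ) : ℂ) = ((E mA t : ℝ) : ℂ) := by
      rw [← Complex.ofReal_mul, E_mul]; norm_num
    rw [mul_assoc, this]
  rw [show (fun t : ℝ => ‖f (B • iPt t) * ((E (ord f B) t : ℝ) : ℂ)‖ * E (mA - ord f B) t) =
      (fun t : ℝ => ‖f (B • iPt t) * ((E mA t : ℝ) : ℂ)‖) from funext heq2] at hnorm
  exact not_tendsto_atTop_of_tendsto_nhds hconv.norm hnorm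

/-- Lemma on divisors: if the span of a finite set `S` of functions on `ℍ`, each having a
well-defined order `ord f A` at every cusp `A∞`, is `SL(2,ℤ)`-invariant, then
`min_{f ∈ S} ord(f, A)` does not depend on `A`. -/
theorem sl2z_invariant_units_stmt9 (S : Finset (UpperHalfPlane → ℂ)) (hS : S.Nonempty)
    (ord : (UpperHalfPlane → ℂ) → SL(2, ℤ) → ℝ)
    (h1 : ∀ f ∈ S, ∀ A : SL(2, ℤ), ∃ κ : ℂ, κ ≠ 0 ∧
      Filter.Tendsto
        (fun t : ℝ => f (A • iPt t) *
          Complex.exp (-(2 * (π : ℂ) * Complex.I * ((ord f A : ℝ) : ℂ) * ((iPt t : ℂ)))))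
        Filter.atTop (nhds κ))
    (h2 : ∀ A : SL(2, ℤ), ∀ f ∈ Submodule.span ℂ (S : Set (UpperHalfPlane → ℂ)),
      (fun z => f (A • z)) ∈ Submodule.span ℂ (S : Set (UpperHalfPlane → ℂ))) :
    ∀ A B : SL(2, ℤ),
      S.inf' hS (fun f => ord f A) = S.inf' hS (fun f => ord f B) := by
  intro A B
  exact le_antisymm (key_le S hS ord h1 h2 A B) (key_le S hS ord h1 h2 B A)
end
end

section
/- Let D and N be positive integers and let f be a formal power series in one variable over ℚ all of whose coefficients lie in (1/D)·ℤ. If all coefficients of f^N are integers, then all coefficients of f are integers. -/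
/-!
Write `D • f = g` with `g ∈ ℤ[[q]]`. For a prime `p ∣ D`, the coefficients of `g ^ N = D ^ N • f ^ N`
are divisible by `p`; since `𝔽_p[[q]]` is an integral domain, so are those of `g`. Hence the
coefficients of `f` lie in `(1/(D/p))·ℤ`, and induction on `D` concludes.
-/

open PowerSeries

theorem PowerSeries.coeff_mem_of_coeff_pow_mem {R : Type*} [CommRing R] {P : Ideal R}
    [P.IsPrime] {g : R⟦X⟧} {N : ℕ} (hN : N ≠ 0) (h : ∀ n, coeff n (g ^ N) ∈ P) (n : ℕ) :
    coeff n g ∈ P := by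
  have hpow : map (Ideal.Quotient.mk P) g ^ N = 0 := by
    ext k
    simpa [← map_pow, Ideal.Quotient.eq_zero_iff_mem] using h k
  rw [← Ideal.Quotient.eq_zero_iff_mem, ← coeff_map, pow_eq_zero_iff hN |>.mp hpow, map_zero]

theorem exists_coeff_eq_div_of_prime_dvd {D N p : ℕ} (hD : D ≠ 0) (hp : p.Prime) (hpD : p ∣ D)
    (hN : N ≠ 0) {f : ℚ⟦X⟧} (h1 : ∀ n, ∃ m : ℤ, coeff n f = m / D)
    (h2 : ∀ n, ∃ m : ℤ, coeff n (f ^ N) = m) (n : ℕ) :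
    ∃ m : ℤ, coeff n f = m / (D / p : ℕ) := by
  choose b hb using h1
  set g : ℤ⟦X⟧ := mk b
  have hg : map (Int.castRingHom ℚ) g = C (D : ℚ) * f := by
    ext k
    rw [coeff_map, coeff_C_mul, hb k, mul_div_cancel₀ _ (by exact_mod_cast hD)]
    simp [g]
  have hgN (k : ℕ) : coeff k (g ^ N) ∈ Ideal.span {(p : ℤ)} := by
    obtain ⟨m, hm⟩ := h2 k
    have hcoeff : coeff k (g ^ N) = (D : ℤ) ^ N * m := by
      have := congrArg (coeff k) (congrArg (· ^ N) hg)
      simp only [← map_pow, coeff_map, mul_pow, ← map_pow C, coeff_C_mul, hm, eq_intCast] at this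
      exact_mod_cast this
    rw [Ideal.mem_span_singleton, hcoeff]
    exact (dvd_pow (Int.natCast_dvd_natCast.mpr hpD) hN).mul_right m
  have : (Ideal.span {(p : ℤ)}).IsPrime :=
    (Ideal.span_singleton_prime (by exact_mod_cast hp.ne_zero)).mpr (Nat.prime_iff_prime_int.mp hp)
  obtain ⟨c, hc⟩ := Ideal.mem_span_singleton.mp (coeff_mem_of_coeff_pow_mem hN hgN n)
  refine ⟨c, ?_⟩
  have hbn : b n = p * c := by simpa [g] using hc
  rw [Nat.cast_div_charZero hpD, div_div_eq_mul_div, hb n, hbn]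
  push_cast
  ring

/-- If all coefficients of a formal power series `f ∈ ℚ[[q]]` lie in `(1/D)·ℤ` and all
coefficients of `f^N` (for some `N ≥ 1`) are integers, then all coefficients of `f` are
integers. -/
theorem sl2z_invariant_units_stmt12 (D N : ℕ) (hD : 0 < D) (hN : 0 < N)
    (f : PowerSeries ℚ)
    (h1 : ∀ n : ℕ, ∃ m : ℤ, PowerSeries.coeff n f = (m : ℚ) / (D : ℚ))
    (h2 : ∀ n : ℕ, ∃ m : ℤ, PowerSeries.coeff n (f ^ N) = (m : ℚ)) :
    ∀ n : ℕ, ∃ m : ℤ, PowerSeries.coeff n f = (m : ℚ) := by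
  induction D using Nat.strong_induction_on with
  | _ D ih =>
    obtain rfl | hD1 := eq_or_ne D 1
    · simpa using h1
    obtain ⟨p, hp, hpD⟩ := Nat.exists_prime_and_dvd hD1
    exact ih (D / p) (Nat.div_lt_self hD hp.one_lt) (Nat.div_pos (Nat.le_of_dvd hD hpD) hp.pos)
      (exists_coeff_eq_div_of_prime_dvd hD.ne' hp hpD hN.ne' h1 h2)
end

section
/- Let l ≥ 1 and r be integers with l ∤ r. Then for all z in the upper half plane ℍ, [r]_l(z) = ∏_{s=0}^{l−1} s_{(r/l, s/l)}(z). -/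
open Complex Filter UpperHalfPlane
open scoped Real

noncomputable section

/-- The (inverse) Siegel unit `s_α` for `α = (a₁, a₂) ∈ ℚ²`:
`s_α = q^{−B(a₁)/2} ∏_{n ≥ 0, n ≡ a₁ (ℤ)} (1 − q^n e(a₂))^{−1}
  ∏_{n > 0, n ≡ −a₁ (ℤ)} (1 − q^n e(−a₂))^{−1}`.
The first product is indexed by the integers `k` with `a₁ + k ≥ 0` (so `n = a₁ + k`), the
second by the integers `k` with `−a₁ + k > 0` (so `n = −a₁ + k`). -/
def siegelUnit (α : ℚ × ℚ) : UpperHalfPlane → ℂ := fun z =>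
  Complex.exp (2 * (π : ℂ) * Complex.I * ((-(bern (α.1 : ℝ) / 2) : ℝ) : ℂ) * (z : ℂ)) *
    (∏' k : {k : ℤ // 0 ≤ α.1 + k},
      (1 - Complex.exp (2 * (π : ℂ) * Complex.I * (((α.1 + (k : ℤ) : ℚ)) : ℂ) * (z : ℂ)) *
        Complex.exp (2 * (π : ℂ) * Complex.I * ((α.2 : ℂ))))⁻¹) *
    (∏' k : {k : ℤ // 0 < -α.1 + k},
      (1 - Complex.exp (2 * (π : ℂ) * Complex.I * (((-α.1 + (k : ℤ) : ℚ)) : ℂ) * (z : ℂ)) *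
        Complex.exp (-(2 * (π : ℂ) * Complex.I * ((α.2 : ℂ)))))⁻¹)





lemma log_inv_bound {w : ℂ} (h : ‖w‖ ≤ 1/4) : ‖Complex.log ((1 - w)⁻¹)‖ ≤ 2 * ‖w‖ := by
  have hw1 : ‖w‖ < 1 := by linarith
  have hne : (1 : ℂ) - w ≠ 0 := by
    intro hz
    have : ‖(1:ℂ)‖ ≤ ‖w‖ := by
      calc ‖(1:ℂ)‖ = ‖(1 - w) + w‖ := by ring_nf
      _ ≤ ‖(1:ℂ) - w‖ + ‖w‖ := norm_add_le _ _
      _ = ‖w‖ := by rw [hz]; simp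
    simp only [norm_one] at this; linarith
  have key : (1 - w)⁻¹ = 1 + w / (1 - w) := by field_simp; ring
  have hnorm : ‖w / (1 - w)‖ ≤ (4/3) * ‖w‖ := by
    rw [norm_div]
    have h34 : (3:ℝ)/4 ≤ ‖1 - w‖ := by
      have := norm_sub_norm_le (1 : ℂ) w
      simp only [norm_one] at this
      linarith
    rw [div_le_iff₀ (by linarith)]
    nlinarith [norm_nonneg w]
  have hhalf : ‖w / (1 - w)‖ ≤ 1/2 := by linarith
  calc ‖Complex.log ((1 - w)⁻¹)‖ = ‖Complex.log (1 + w / (1 - w))‖ := by rw [key]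
    _ ≤ (3/2) * ‖w / (1 - w)‖ := Complex.norm_log_one_add_half_le_self hhalf
    _ ≤ 2 * ‖w‖ := by linarith

lemma multipliable_one_sub_inv {ι : Type*} (w : ι → ℂ) (h1 : ∀ i, ‖w i‖ < 1)
    (hs : Summable fun i => ‖w i‖) : Multipliable fun i => (1 - w i)⁻¹ := by
  have hne : ∀ i, (1 - w i)⁻¹ ≠ 0 := by
    intro i
    apply inv_ne_zero
    intro hz
    have h := h1 i
    have : ‖(1:ℂ)‖ ≤ ‖w i‖ := by
      calc ‖(1:ℂ)‖ = ‖(1 - w i) + w i‖ := by ring_nf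
      _ ≤ ‖(1:ℂ) - w i‖ + ‖w i‖ := norm_add_le _ _
      _ = ‖w i‖ := by rw [hz]; simp
    simp only [norm_one] at this; linarith
  have hlog : Summable fun i => Complex.log ((1 - w i)⁻¹) := by
    apply Summable.of_norm_bounded_eventually (g := fun i => 2 * ‖w i‖) (hs.mul_left 2)
    have : ∀ᶠ i in cofinite, ‖w i‖ ≤ 1/4 := by
      have := hs.tendsto_cofinite_zero
      have h2 := this.eventually (eventually_le_nhds (by norm_num : (0:ℝ) < 1/4))
      exact h2.mono fun i hi => by simpa using hi
    exact this.mono fun i hi => log_inv_bound hi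
  exact Complex.multipliable_of_summable_log hlog

-- norm of the q-power
lemma norm_cexp_q (a : ℝ) (z : UpperHalfPlane) :
    ‖cexp (2*(π:ℂ)*Complex.I * (a:ℂ) * (z:ℂ))‖ = Real.exp (-(2*π*a*z.im)) := by
  rw [Complex.norm_exp]
  congr 1
  simp [Complex.mul_re, Complex.mul_im]

lemma pos_int_of_rat (l : ℕ) (hl : 0 < l) (r k : ℤ) (h : 0 < (r:ℚ)/l + k) :
    0 < r + k * l := by
  have hl' : (0:ℚ) < (l:ℚ) := by exact_mod_cast hl
  have := mul_pos h hl'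
  rw [add_mul, div_mul_cancel₀] at this
  · exact_mod_cast this
  · exact ne_of_gt hl'

lemma summable_exp_subtype (l : ℕ) (hl : 0 < l) (r : ℤ) (z : UpperHalfPlane) :
    Summable (fun k : {k : ℤ // 0 < (r:ℚ)/l + k} =>
      ‖cexp (2*(π:ℂ)*Complex.I * ((((r:ℚ)/l + (k:ℤ) : ℚ)):ℂ) * (z:ℂ))‖) := by
  set ρ : ℝ := Real.exp (-(2*π*z.im/l)) with hρdef
  have hρ0 : 0 ≤ ρ := (Real.exp_pos _).le
  have hρ1 : ρ < 1 := by
    rw [hρdef, Real.exp_lt_one_iff]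
    have h0 : 0 < 2*π*z.im/l := by
      apply div_pos (by positivity) (by exact_mod_cast hl)
    linarith
  have hgeom : Summable (fun m : ℕ => ρ ^ m) := summable_geometric_of_lt_one hρ0 hρ1
  have hψ : Function.Injective
      (fun k : {k : ℤ // 0 < (r:ℚ)/l + k} => (r + k.1 * l).toNat) := by
    intro k₁ k₂ h
    have h1 := pos_int_of_rat l hl r k₁ k₁.2
    have h2 := pos_int_of_rat l hl r k₂ k₂.2
    have hll : (0:ℤ) < l := by exact_mod_cast hl
    simp only at h
    have hA := Int.toNat_of_nonneg h1.le
    have hB := Int.toNat_of_nonneg h2.le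
    have h' : k₁.1 * (l:ℤ) = k₂.1 * (l:ℤ) := by omega
    exact Subtype.ext (mul_right_cancel₀ (by exact_mod_cast hl.ne') h')
  apply (hgeom.comp_injective hψ).congr
  intro k
  have h1 := pos_int_of_rat l hl r k k.2
  have harg : (((r:ℚ)/l + (k.1:ℤ) : ℚ) : ℝ) = ((r + k.1*l).toNat : ℝ) / l := by
    have : ((r + k.1*l).toNat : ℝ) = ((r:ℝ) + k.1*l) := by
      exact_mod_cast Int.toNat_of_nonneg h1.le
    rw [this]
    push_cast
    field_simp
  rw [show ((((r:ℚ)/l + (k.1:ℤ) : ℚ)):ℂ) = ((((r:ℚ)/l + (k.1:ℤ) : ℚ) : ℝ) : ℂ) by norm_cast]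
  rw [norm_cexp_q _ z, harg]
  show ρ ^ (r + k.1 * l).toNat = _
  rw [hρdef, ← Real.exp_nat_mul]
  congr 1
  ring


def reEquiv (l : ℕ) (hl : 0 < l) (r : ℤ) :
    {k : ℤ // 0 < (r:ℚ)/l + k} ≃ {n : ℤ // 0 < n ∧ n ≡ r [ZMOD (l:ℤ)]} where
  toFun k := ⟨r + k.1 * l, pos_int_of_rat l hl r k.1 k.2, by
    rw [Int.ModEq]
    simp [Int.add_mul_emod_self_left]⟩
  invFun n := ⟨(n.1 - r) / l, by
    have hd : (l:ℤ) ∣ n.1 - r := by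
      have := n.2.2
      exact (Int.modEq_iff_dvd.mp this.symm)
    have hl' : (0:ℚ) < (l:ℚ) := by exact_mod_cast hl
    have hcast : (((n.1 - r)/(l:ℤ) : ℤ) : ℚ) = ((n.1:ℚ) - r)/(l:ℚ) := by
      obtain ⟨c, hc⟩ := hd
      rw [hc, Int.mul_ediv_cancel_left _ (by exact_mod_cast hl.ne' : (l:ℤ) ≠ 0)]
      push_cast
      rw [eq_div_iff (by exact_mod_cast hl.ne' : ((l:ℚ)) ≠ 0)]
      have : c * (l:ℤ) = n.1 - r := by rw [mul_comm]; exact hc.symm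
      exact_mod_cast this
    rw [hcast]
    have h0 : (0:ℚ) < (n.1:ℚ) := by exact_mod_cast n.2.1
    rw [← add_div]
    ring_nf
    positivity⟩
  left_inv k := by
    ext
    simp only
    rw [add_sub_cancel_left, Int.mul_ediv_cancel _ (by exact_mod_cast hl.ne' : (l:ℤ) ≠ 0)]
  right_inv n := by
    ext
    simp only
    have hd : (l:ℤ) ∣ n.1 - r := Int.modEq_iff_dvd.mp n.2.2.symm
    rw [Int.ediv_mul_cancel hd]
    ring


lemma norm_term_lt_one (l : ℕ) (hl : 0 < l) (r : ℤ) (z : UpperHalfPlane) (cs : ℂ)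
    (hcs : ‖cs‖ = 1) (k : {k : ℤ // 0 < (r:ℚ)/l + k}) :
    ‖cexp (2*(π:ℂ)*Complex.I * ((((r:ℚ)/l + (k.1:ℤ) : ℚ)):ℂ) * (z:ℂ)) * cs‖ < 1 := by
  rw [norm_mul, hcs, mul_one]
  rw [show ((((r:ℚ)/l + (k.1:ℤ) : ℚ)):ℂ) = ((((r:ℚ)/l + (k.1:ℤ) : ℚ) : ℝ) : ℂ) by norm_cast]
  rw [norm_cexp_q _ z, Real.exp_lt_one_iff]
  have h1 : (0:ℝ) < (((r:ℚ)/l + (k.1:ℤ) : ℚ) : ℝ) := by exact_mod_cast k.2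
  have hy := z.im_pos
  have := mul_pos (mul_pos (mul_pos two_pos Real.pi_pos) h1) hy
  linarith

lemma piece (l : ℕ) (hl : 0 < l) (r : ℤ) (hr : ¬ (l:ℤ) ∣ r) (z : UpperHalfPlane) (c : ℕ → ℂ)
    (hc : ∀ s, ‖c s‖ = 1)
    (hcyc : ∀ w : ℂ, ∏ s ∈ Finset.range l, (1 - w * c s) = 1 - w ^ l) :
    ∏ s ∈ Finset.range l, (∏' k : {k : ℤ // 0 < (r:ℚ)/l + k},
        (1 - cexp (2*(π:ℂ)*Complex.I * ((((r:ℚ)/l + (k.1:ℤ) : ℚ)):ℂ) * (z:ℂ)) * c s)⁻¹)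
    = ∏' n : {n : ℤ // 0 < n ∧ n ≡ r [ZMOD (l:ℤ)]},
        (1 - cexp (2*(π:ℂ)*Complex.I * ((n.1:ℤ):ℂ) * (z:ℂ)))⁻¹ := by
  have hmult : ∀ s ∈ Finset.range l, Multipliable (fun k : {k : ℤ // 0 < (r:ℚ)/l + k} =>
      (1 - cexp (2*(π:ℂ)*Complex.I * ((((r:ℚ)/l + (k.1:ℤ) : ℚ)):ℂ) * (z:ℂ)) * c s)⁻¹) := by
    intro s _
    apply multipliable_one_sub_inv
    · exact fun k => norm_term_lt_one l hl r z (c s) (hc s) k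
    · apply ((summable_exp_subtype l hl r z).congr _)
      intro k
      rw [norm_mul, hc s, mul_one]
  rw [← Multipliable.tprod_finsetProd hmult]
  have hstep : (fun k : {k : ℤ // 0 < (r:ℚ)/l + k} => ∏ s ∈ Finset.range l,
      (1 - cexp (2*(π:ℂ)*Complex.I * ((((r:ℚ)/l + (k.1:ℤ) : ℚ)):ℂ) * (z:ℂ)) * c s)⁻¹)
      = (fun k : {k : ℤ // 0 < (r:ℚ)/l + k} => (fun n : {n : ℤ // 0 < n ∧ n ≡ r [ZMOD (l:ℤ)]} =>
          (1 - cexp (2*(π:ℂ)*Complex.I * ((n.1:ℤ):ℂ) * (z:ℂ)))⁻¹) (reEquiv l hl r k)) := by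
    funext k
    rw [Finset.prod_inv_distrib, hcyc, ← Complex.exp_nat_mul]
    simp only [reEquiv, Equiv.coe_fn_mk]
    congr 1
    have hlne : (l:ℂ) ≠ 0 := by exact_mod_cast hl.ne'
    have hq : ((l:ℂ)) * ((((r:ℚ)/l + (k.1:ℤ) : ℚ)):ℂ) = ((r + k.1 * l : ℤ):ℂ) := by
      rw [show ((((r:ℚ)/l + (k.1:ℤ) : ℚ)):ℂ) = ((r:ℂ)/l + (k.1:ℂ)) by push_cast; ring]
      push_cast
      field_simp
    rw [show (l:ℂ) * (2*(π:ℂ)*Complex.I * ((((r:ℚ)/l + (k.1:ℤ) : ℚ)):ℂ) * (z:ℂ))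
        = 2*(π:ℂ)*Complex.I * (((l:ℂ)) * ((((r:ℚ)/l + (k.1:ℤ) : ℚ)):ℂ)) * (z:ℂ) from by ring,
      hq]
  rw [hstep]
  exact Equiv.tprod_eq (reEquiv l hl r)
    (fun n => (1 - cexp (2*(π:ℂ)*Complex.I * ((n.1:ℤ):ℂ) * (z:ℂ)))⁻¹)

lemma cyc_prod (l : ℕ) (hl : 0 < l) (ζ : ℂ) (hζ : IsPrimitiveRoot ζ l) (w : ℂ) :
    ∏ s ∈ Finset.range l, (1 - w * ζ ^ s) = 1 - w ^ l := by
  have h := X_pow_sub_C_eq_prod hζ hl (rfl : w ^ l = w ^ l)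
  have h2 := congrArg (Polynomial.eval 1) h
  simp only [Polynomial.eval_prod, Polynomial.eval_sub, Polynomial.eval_pow, Polynomial.eval_X,
    Polynomial.eval_C, Polynomial.eval_one, one_pow, mul_one] at h2
  rw [← h2.symm]
  exact Finset.prod_congr rfl fun s _ => by ring

lemma norm_cexp_rat (q : ℚ) : ‖cexp (2*(π:ℂ)*Complex.I * (q:ℂ))‖ = 1 := by
  rw [Complex.norm_exp]
  have : (2*(π:ℂ)*Complex.I * (q:ℂ)).re = 0 := by
    simp [Complex.mul_re, Complex.mul_im]
  rw [this, Real.exp_zero]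


lemma le_iff_lt_cond (l : ℕ) (hl : 0 < l) (r : ℤ) (hr : ¬ (l:ℤ) ∣ r) (k : ℤ) :
    0 ≤ (r:ℚ)/(l:ℚ) + k ↔ 0 < (r:ℚ)/(l:ℚ) + k := by
  constructor
  · intro h
    rcases h.lt_or_eq with h' | h'
    · exact h'
    · exfalso
      apply hr
      have hlQ : ((l:ℚ)) ≠ 0 := by exact_mod_cast hl.ne'
      have : (r:ℚ) = (-k) * l := by
        field_simp at h'
        linarith [h'.symm]
      have : r = -k * l := by exact_mod_cast this
      exact ⟨-k, by rw [this]; ring⟩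
  · exact le_of_lt

/-- `[r]_l = ∏_{s=0}^{l−1} s_{(r/l, s/l)}`. -/
theorem sl2z_invariant_units_stmt16 (l : ℕ) (hl : 0 < l) (r : ℤ) (hr : ¬ (l : ℤ) ∣ r) :
    ∀ z : UpperHalfPlane,
      rl l r z = ∏ s ∈ Finset.range l, siegelUnit ((r : ℚ) / (l : ℚ), (s : ℚ) / (l : ℚ)) z := by
  intro z
  have hr2 : ¬ ((l:ℕ):ℤ) ∣ (-r) := fun h => hr (dvd_neg.mp h)
  have hζ : IsPrimitiveRoot (cexp (2*(π:ℂ)*Complex.I / l)) l :=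
    Complex.isPrimitiveRoot_exp l hl.ne'
  have hc1 : ∀ s : ℕ, ‖cexp (2*(π:ℂ)*Complex.I * ((((s:ℚ)/(l:ℚ)):ℚ):ℂ))‖ = 1 :=
    fun s => norm_cexp_rat _
  have hc2 : ∀ s : ℕ, ‖cexp (-(2*(π:ℂ)*Complex.I * ((((s:ℚ)/(l:ℚ)):ℚ):ℂ)))‖ = 1 := by
    intro s; rw [Complex.exp_neg, norm_inv, norm_cexp_rat]; norm_num
  have hpow1 : ∀ s : ℕ, cexp (2*(π:ℂ)*Complex.I * ((((s:ℚ)/(l:ℚ)):ℚ):ℂ))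
      = (cexp (2*(π:ℂ)*Complex.I / l))^s := by
    intro s
    rw [← Complex.exp_nat_mul]
    congr 1
    rw [show ((((s:ℚ)/(l:ℚ)):ℚ):ℂ) = (s:ℂ)/(l:ℂ) by push_cast; ring]
    ring
  have hpow2 : ∀ s : ℕ, cexp (-(2*(π:ℂ)*Complex.I * ((((s:ℚ)/(l:ℚ)):ℚ):ℂ)))
      = ((cexp (2*(π:ℂ)*Complex.I / l))⁻¹)^s := by
    intro s
    rw [Complex.exp_neg, hpow1 s, inv_pow]
  have hcyc1 : ∀ w : ℂ, ∏ s ∈ Finset.range l,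
      (1 - w * cexp (2*(π:ℂ)*Complex.I * ((((s:ℚ)/(l:ℚ)):ℚ):ℂ))) = 1 - w ^ l := by
    intro w
    rw [Finset.prod_congr rfl (fun s _ => by rw [hpow1 s])]
    exact cyc_prod l hl _ hζ w
  have hcyc2 : ∀ w : ℂ, ∏ s ∈ Finset.range l,
      (1 - w * cexp (-(2*(π:ℂ)*Complex.I * ((((s:ℚ)/(l:ℚ)):ℚ):ℂ)))) = 1 - w ^ l := by
    intro w
    rw [Finset.prod_congr rfl (fun s _ => by rw [hpow2 s])]
    exact cyc_prod l hl _ hζ.inv w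
  have hP1 := piece l hl r hr z
    (fun s => cexp (2*(π:ℂ)*Complex.I * ((((s:ℚ)/(l:ℚ)):ℚ):ℂ))) hc1 hcyc1
  have hP2 := piece l hl (-r) hr2 z
    (fun s => cexp (-(2*(π:ℂ)*Complex.I * ((((s:ℚ)/(l:ℚ)):ℚ):ℂ)))) hc2 hcyc2
  simp only [rl, siegelUnit]
  rw [Finset.prod_mul_distrib, Finset.prod_mul_distrib]
  congr 1
  · congr 1
    · -- exponential factors
      rw [Finset.prod_const, Finset.card_range, ← Complex.exp_nat_mul]
      congr 1
      have hB : ((((r:ℚ)/(l:ℚ)):ℚ):ℝ) = ((r:ℤ):ℝ)/((((l:ℕ):ℤ)):ℝ) := by push_cast; ring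
      rw [hB]
      push_cast
      ring
    · -- first tprod factors
      rw [← hP1]
      apply Finset.prod_congr rfl
      intro s _
      exact tprod_congr_subtype
        (fun n : ℤ => (1 - cexp (2*(π:ℂ)*Complex.I * ((((r:ℚ)/(l:ℚ) + (n:ℚ)) : ℚ):ℂ) * (z:ℂ))
          * cexp (2*(π:ℂ)*Complex.I * ((((s:ℚ)/(l:ℚ)):ℚ):ℂ)))⁻¹)
        (fun k => (le_iff_lt_cond l hl r hr k).symm)
  · -- second tprod factors
    rw [← hP2]
    apply Finset.prod_congr rfl
    intro s _
    have hQeq : ∀ k : ℤ, (((-r:ℤ):ℚ))/(l:ℚ) + (k:ℚ) = -((r:ℚ)/(l:ℚ)) + (k:ℚ) := by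
      intro k; push_cast; ring
    refine (tprod_congr (fun k => ?_)).trans
      (tprod_congr_subtype
        (fun n : ℤ => (1 - cexp (2*(π:ℂ)*Complex.I * (((-((r:ℚ)/(l:ℚ)) + (n:ℚ)) : ℚ):ℂ) * (z:ℂ))
          * cexp (-(2*(π:ℂ)*Complex.I * ((((s:ℚ)/(l:ℚ)):ℚ):ℂ))))⁻¹)
        (fun k => by rw [hQeq k]))
    rw [show ((((-r:ℤ):ℚ))/(l:ℚ) + ((k.1:ℤ):ℚ) : ℚ) = (-((r:ℚ)/(l:ℚ)) + ((k.1:ℤ):ℚ) : ℚ)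
      from hQeq k.1]
end
end
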